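/- arXiv:1205.2040 — 8 statements merged into one kernel-verified Lean document; each statement's English description precedes it below -/
import Mathlib

section
/- Let X and Z be real symmetric n×n matrices with X positive semidefinite, such that: (a) Xz = 0 implies zᵀZz ≥ 0, and (b) Xz = 0 together with zᵀZz = 0 implies Zz = 0. Then there exists t > 0 such that X + tZ is positive semidefinite. -/
open Matrix Submodule

private abbrev Eu (n : ℕ) := EuclideanSpace ℝ (Fin n)

private lemma exists_pos_forall_le {n : ℕ} (f : Eu n → ℝ) (hf : Continuous f)
    (W : Submodule ℝ (Eu n)) (hpos : ∀ w ∈ W, ‖w‖ = 1 → 0 < f w) :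
    ∃ μ : ℝ, 0 < μ ∧ ∀ w ∈ W, ‖w‖ = 1 → μ ≤ f w := by
  by_cases hne : (Metric.sphere (0 : Eu n) 1 ∩ W : Set (Eu n)).Nonempty
  · obtain ⟨x, hx, hmin⟩ := ((isCompact_sphere (0 : Eu n) 1).inter_right
      W.closed_of_finiteDimensional).exists_isMinOn hne hf.continuousOn
    have hx1 : ‖x‖ = 1 := by simpa using hx.1
    refine ⟨f x, hpos x hx.2 hx1, fun w hw hw1 => isMinOn_iff.mp hmin w ⟨?_, hw⟩⟩
    simp only [Metric.mem_sphere, dist_zero_right]; exact hw1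
  · refine ⟨1, one_pos, fun w hw hw1 => absurd ?_ hne⟩
    exact ⟨w, by simpa using hw1, hw⟩

private lemma exists_pos_quad {n : ℕ} (M : Matrix (Fin n) (Fin n) ℝ) (W : Submodule ℝ (Eu n))
    (hpos : ∀ w ∈ W, ‖w‖ = 1 → 0 < (inner ℝ w (Matrix.toEuclideanLin M w) : ℝ)) :
    ∃ μ : ℝ, 0 < μ ∧ ∀ w ∈ W, μ * ‖w‖ ^ 2 ≤ (inner ℝ w (Matrix.toEuclideanLin M w) : ℝ) := by
  have hcont : Continuous fun w : Eu n => (inner ℝ w (Matrix.toEuclideanLin M w) : ℝ) := by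
    have : ∀ w : Eu n, Matrix.toEuclideanLin M w = Matrix.toEuclideanCLM (𝕜 := ℝ) M w := by
      intro w
      rw [← Matrix.coe_toEuclideanCLM_eq_toEuclideanLin]
      rfl
    simp only [this]
    exact continuous_id.inner (Matrix.toEuclideanCLM (𝕜 := ℝ) M).continuous
  obtain ⟨μ, hμ, h⟩ := exists_pos_forall_le _ hcont W hpos
  refine ⟨μ, hμ, fun w hw => ?_⟩
  rcases eq_or_ne w 0 with rfl | hw0
  · simp
  · have hn : (0:ℝ) < ‖w‖ := norm_pos_iff.mpr hw0
    have h1 : ‖(‖w‖⁻¹ • w)‖ = 1 := by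
      rw [norm_smul, norm_inv, norm_norm]; field_simp
    have h2 := h (‖w‖⁻¹ • w) (W.smul_mem _ hw) h1
    rw [_root_.map_smul, real_inner_smul_left, real_inner_smul_right] at h2
    have := mul_le_mul_of_nonneg_left h2 (le_of_lt (mul_pos hn hn))
    calc μ * ‖w‖ ^ 2 = ‖w‖ * ‖w‖ * μ := by ring
    _ ≤ ‖w‖ * ‖w‖ * (‖w‖⁻¹ * (‖w‖⁻¹ * inner ℝ w (Matrix.toEuclideanLin M w))) := this
    _ = inner ℝ w (Matrix.toEuclideanLin M w) := by field_simp
set_option maxHeartbeats 1000000 in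
theorem psd_perturbation_exists (n : ℕ) (X Z : Matrix (Fin n) (Fin n) ℝ)
    (hX : X.PosSemidef) (hZ : Z.IsSymm)
    (ha : ∀ z : Fin n → ℝ, X.mulVec z = 0 → 0 ≤ z ⬝ᵥ Z.mulVec z)
    (hb : ∀ z : Fin n → ℝ, X.mulVec z = 0 → z ⬝ᵥ Z.mulVec z = 0 → Z.mulVec z = 0) :
    ∃ t : ℝ, 0 < t ∧ (X + t • Z).PosSemidef := by
  classical
  have hZh : Z.IsHermitian := Matrix.IsHermitian.ext fun i j => by
    rw [star_trivial]; exact hZ.apply i j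
  set e := WithLp.equiv 2 (Fin n → ℝ) with he
  have hdot : ∀ (M : Matrix (Fin n) (Fin n) ℝ) (w : Eu n),
      (inner ℝ w (Matrix.toEuclideanLin M w) : ℝ) = (e w) ⬝ᵥ M *ᵥ (e w) := by
    intro M w
    rw [Matrix.toEuclideanLin_apply]
    simp [PiLp.inner_apply, dotProduct, he, mul_comm]
  have hker : ∀ (M : Matrix (Fin n) (Fin n) ℝ) (w : Eu n),
      Matrix.toEuclideanLin M w = 0 ↔ M *ᵥ (e w) = 0 := by
    intro M w
    rw [Matrix.toEuclideanLin_apply]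
    constructor
    · intro h
      simpa [he] using congrArg (WithLp.equiv 2 (Fin n → ℝ)) h
    · intro h
      rw [he] at h
      change WithLp.toLp 2 (M *ᵥ (WithLp.equiv 2 (Fin n → ℝ)) w) = 0
      rw [h, WithLp.toLp_zero]
  set TX := Matrix.toEuclideanLin X with hTX
  set TZ := Matrix.toEuclideanLin Z with hTZ
  have hsymX : LinearMap.IsSymmetric TX := Matrix.isHermitian_iff_isSymmetric.mp hX.1
  have hsymZ : LinearMap.IsSymmetric TZ := Matrix.isHermitian_iff_isSymmetric.mp hZh
  set K : Submodule ℝ (Eu n) := LinearMap.ker TX with hK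
  set K₀ : Submodule ℝ (Eu n) := K ⊓ LinearMap.ker TZ with hK₀
  obtain ⟨lam, hlam, hlamle⟩ := exists_pos_quad X Kᗮ (by
    intro v hv hv1
    rw [← hTX]
    have h1 : (0:ℝ) ≤ inner ℝ v (TX v) := by
      rw [hTX, hdot]
      simpa using hX.dotProduct_mulVec_nonneg (e v)
    rcases lt_or_eq_of_le h1 with h | h
    · exact h
    · exfalso
      have h2 : X *ᵥ (e v) = 0 := by
        rw [← hX.dotProduct_mulVec_zero_iff, star_trivial, ← hdot, ← hTX]
        exact h.symm
      have hvK : v ∈ K := LinearMap.mem_ker.mpr ((hker X v).mpr h2)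
      have h3 : (inner ℝ v v : ℝ) = 0 := (Submodule.mem_orthogonal _ _).mp hv v hvK
      rw [inner_self_eq_zero] at h3
      rw [h3, norm_zero] at hv1
      exact zero_ne_one hv1)
  obtain ⟨mu, hmu, hmule⟩ := exists_pos_quad Z (K ⊓ K₀ᗮ) (by
    intro u hu hu1
    obtain ⟨huK, huO⟩ := hu
    rw [← hTZ]
    have hXu : X *ᵥ (e u) = 0 := (hker X u).mp (LinearMap.mem_ker.mp huK)
    have h1 : (0:ℝ) ≤ inner ℝ u (TZ u) := by
      rw [hTZ, hdot]
      exact ha _ hXu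
    rcases lt_or_eq_of_le h1 with h | h
    · exact h
    · exfalso
      have hZu : Z *ᵥ (e u) = 0 := hb _ hXu (by rw [← hdot, ← hTZ]; exact h.symm)
      have huK₀ : u ∈ K₀ :=
        Submodule.mem_inf.mpr ⟨huK, LinearMap.mem_ker.mpr ((hker Z u).mpr hZu)⟩
      have h3 : (inner ℝ u u : ℝ) = 0 := (Submodule.mem_orthogonal _ _).mp huO u huK₀
      rw [inner_self_eq_zero] at h3
      rw [h3, norm_zero] at hu1
      exact zero_ne_one hu1)
  rw [← hTX] at hlamle
  rw [← hTZ] at hmule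
  set c : ℝ := ‖Matrix.toEuclideanCLM (𝕜 := ℝ) Z‖ + 1 with hc
  have hcpos : 0 < c := by positivity
  have hZb : ∀ a b : Eu n, |(inner ℝ a (TZ b) : ℝ)| ≤ c * (‖a‖ * ‖b‖) := by
    intro a b
    have h1 : |(inner ℝ a (TZ b) : ℝ)| ≤ ‖a‖ * ‖TZ b‖ := abs_real_inner_le_norm _ _
    have h2 : ‖TZ b‖ ≤ c * ‖b‖ := by
      have h3 := (Matrix.toEuclideanCLM (𝕜 := ℝ) Z).le_opNorm b
      have heq : Matrix.toEuclideanCLM (𝕜 := ℝ) Z b = TZ b := by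
        rw [hTZ, ← Matrix.coe_toEuclideanCLM_eq_toEuclideanLin]
        rfl
      rw [heq] at h3
      nlinarith [norm_nonneg b]
    calc |(inner ℝ a (TZ b) : ℝ)| ≤ ‖a‖ * ‖TZ b‖ := h1
      _ ≤ ‖a‖ * (c * ‖b‖) := by nlinarith [norm_nonneg a, norm_nonneg (TZ b)]
      _ = c * (‖a‖ * ‖b‖) := by ring
  set t : ℝ := lam * mu / (c ^ 2 + c * mu) with htdef
  have htpos : 0 < t := by positivity
  have ht : t * (c ^ 2 + c * mu) = lam * mu := by
    rw [htdef]
    field_simp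
  refine ⟨t, htpos, .of_dotProduct_mulVec_nonneg (hX.1.add (show (t • Z)ᴴ = t • Z by
    rw [Matrix.conjTranspose_smul, star_trivial, hZh.eq])) ?_⟩
  intro x
  rw [star_trivial]
  set w : Eu n := e.symm x with hw
  have hex : e w = x := Equiv.apply_symm_apply _ _
  have key : x ⬝ᵥ (X + t • Z) *ᵥ x = inner ℝ w (TX w) + t * inner ℝ w (TZ w) := by
    rw [← hex, ← hdot (X + t • Z) w, map_add, _root_.map_smul, LinearMap.add_apply,
      LinearMap.smul_apply, inner_add_right, real_inner_smul_right, hTX, hTZ]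
  set u : Eu n := (orthogonalProjection K w : Eu n) with hu
  set v : Eu n := w - u with hv
  have hvK : v ∈ Kᗮ := sub_starProjection_mem_orthogonal (K := K) w
  have huK : u ∈ K := Submodule.coe_mem _
  set u₀ : Eu n := (orthogonalProjection K₀ u : Eu n) with hu₀
  set u₁ : Eu n := u - u₀ with hu₁
  have hu₁O : u₁ ∈ K₀ᗮ := sub_starProjection_mem_orthogonal (K := K₀) u
  have hu₀K₀ : u₀ ∈ K₀ := Submodule.coe_mem _
  have hu₀K : u₀ ∈ K := (hK₀ ▸ hu₀K₀).1
  have hu₁K : u₁ ∈ K := K.sub_mem huK hu₀K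
  have hTXu : TX u = 0 := LinearMap.mem_ker.mp huK
  have hTZu₀ : TZ u₀ = 0 := LinearMap.mem_ker.mp (hK₀ ▸ hu₀K₀).2
  have step1 : (inner ℝ w (TX w) : ℝ) = inner ℝ v (TX v) := by
    have hwuv : w = u + v := by rw [hv]; abel
    rw [hwuv, map_add, hTXu, zero_add, inner_add_left]
    have hcross : (inner ℝ u (TX v) : ℝ) = 0 := by
      rw [← hsymX u v, hTXu, inner_zero_left]
    rw [hcross, zero_add]
  have step2 : (inner ℝ w (TZ w) : ℝ)
      = inner ℝ u₁ (TZ u₁) + 2 * inner ℝ u₁ (TZ v) + inner ℝ v (TZ v) := by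
    have hww : w = u₀ + (u₁ + v) := by rw [hv, hu₁]; abel
    rw [hww, map_add, hTZu₀, zero_add, inner_add_left]
    have h0 : (inner ℝ u₀ (TZ (u₁ + v)) : ℝ) = 0 := by
      rw [← hsymZ u₀ (u₁ + v), hTZu₀, inner_zero_left]
    rw [h0, zero_add, map_add, inner_add_left, inner_add_right, inner_add_right]
    have hcross : (inner ℝ v (TZ u₁) : ℝ) = inner ℝ u₁ (TZ v) := by
      rw [← hsymZ v u₁]
      exact real_inner_comm _ _
    rw [hcross]; ring
  have hA : lam * ‖v‖ ^ 2 ≤ inner ℝ v (TX v) := hlamle v hvK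
  have hB : mu * ‖u₁‖ ^ 2 ≤ inner ℝ u₁ (TZ u₁) := hmule u₁ ⟨hu₁K, hu₁O⟩
  have hC := abs_le.mp (hZb u₁ v)
  have hD := abs_le.mp (hZb v v)
  rw [key, step1, step2]
  nlinarith [mul_nonneg htpos.le (sq_nonneg (c * ‖v‖ - mu * ‖u₁‖)), sq_nonneg ‖v‖,
    norm_nonneg u₁, norm_nonneg v, hC.1, hD.1, mul_pos hlam hmu, ht, htpos, hmu, hcpos, hlam,
    mul_le_mul_of_nonneg_left hB htpos.le, mul_le_mul_of_nonneg_left hC.1 htpos.le,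
    mul_le_mul_of_nonneg_left hD.1 htpos.le, hA]
end

section
/- Let X₁ and X₂ be positive semidefinite matrices indexed by finite sets V₁ and V₂ respectively, which agree on their common principal submatrix indexed by V₁ ∩ V₂. Then there exists a positive semidefinite matrix X indexed by V₁ ∪ V₂ whose principal submatrices indexed by V₁ and V₂ equal X₁ and X₂ respectively, and whose rank equals max{rank X₁, rank X₂}. -/
set_option maxHeartbeats 2000000

open Matrix Module

section Helpers

noncomputable def zeroExtendLI {m k : Type*} [Fintype m] [Fintype k]
    (f : m ↪ k) : EuclideanSpace ℝ m →ₗᵢ[ℝ] EuclideanSpace ℝ k where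
  toLinearMap :=
    { toFun := fun x => WithLp.toLp 2 (fun j => Function.extend f x 0 j)
      map_add' := by
        intro x y
        ext j
        by_cases h : ∃ i, f i = j
        · obtain ⟨i, rfl⟩ := h
          simp [f.injective.extend_apply]
        · simp [Function.extend_apply' _ _ _ h]
      map_smul' := by
        intro c x
        ext j
        by_cases h : ∃ i, f i = j
        · obtain ⟨i, rfl⟩ := h
          simp [f.injective.extend_apply]
        · simp [Function.extend_apply' _ _ _ h] }
  norm_map' := by
    intro x
    rw [EuclideanSpace.norm_eq, EuclideanSpace.norm_eq]
    congr 1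
    show ∑ j : k, ‖Function.extend f x 0 j‖ ^ 2 = _
    calc ∑ j : k, ‖Function.extend f x 0 j‖ ^ 2
        = ∑ j ∈ Finset.univ.map f, ‖Function.extend f x 0 j‖ ^ 2 := by
          refine (Finset.sum_subset (Finset.subset_univ _) ?_).symm
          intro j _ hj
          have : ¬ ∃ i, f i = j := by
            intro ⟨i, hi⟩
            exact hj (Finset.mem_map.2 ⟨i, Finset.mem_univ _, hi⟩)
          simp [Function.extend_apply' _ _ _ this]
      _ = ∑ i : m, ‖Function.extend f x 0 (f i)‖ ^ 2 := Finset.sum_map _ _ _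
      _ = ∑ i : m, ‖x i‖ ^ 2 := by
          refine Finset.sum_congr rfl fun i _ => ?_
          simp [f.injective.extend_apply]

lemma zeroExtendLI_apply {m k : Type*} [Fintype m] [Fintype k]
    (f : m ↪ k) (x : EuclideanSpace ℝ m) (i : m) :
    zeroExtendLI f x (f i) = x i := by
  simp [zeroExtendLI, f.injective.extend_apply]

noncomputable def liOfFinrankLe {E F : Type*} [NormedAddCommGroup E] [InnerProductSpace ℝ E]
    [NormedAddCommGroup F] [InnerProductSpace ℝ F] [FiniteDimensional ℝ E]
    [FiniteDimensional ℝ F] (h : finrank ℝ E ≤ finrank ℝ F) : E →ₗᵢ[ℝ] F :=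
  ((stdOrthonormalBasis ℝ F).repr.symm.toLinearIsometry.comp
    (zeroExtendLI (Fin.castLEEmb h))).comp
    (stdOrthonormalBasis ℝ E).repr.toLinearIsometry

lemma exists_isometry_of_gram_eq {E F : Type*} [NormedAddCommGroup E] [InnerProductSpace ℝ E]
    [NormedAddCommGroup F] [InnerProductSpace ℝ F]
    {κ : Type*} [Fintype κ] (u : κ → F) (v : κ → E)
    (h : ∀ a b, (inner ℝ (u a) (u b) : ℝ) = inner ℝ (v a) (v b)) :
    ∃ φ : LinearMap.range (Fintype.linearCombination ℝ v) →ₗᵢ[ℝ] F,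
      ∀ c : κ → ℝ, φ ⟨Fintype.linearCombination ℝ v c, LinearMap.mem_range_self _ c⟩
        = Fintype.linearCombination ℝ u c := by
  set Tv := Fintype.linearCombination ℝ v with hTv
  set Tu := Fintype.linearCombination ℝ u with hTu
  have hnorm : ∀ c, ‖Tu c‖ = ‖Tv c‖ := by
    intro c
    rw [← sq_eq_sq₀ (norm_nonneg _) (norm_nonneg _)]
    rw [← real_inner_self_eq_norm_sq, ← real_inner_self_eq_norm_sq]
    rw [hTu, hTv]
    simp only [Fintype.linearCombination_apply, inner_sum, sum_inner,
      real_inner_smul_left, real_inner_smul_right, h]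
  have hker : LinearMap.ker Tv ≤ LinearMap.ker Tu := by
    intro c hc
    rw [LinearMap.mem_ker] at hc ⊢
    have := hnorm c
    rw [hc, norm_zero, norm_eq_zero] at this
    exact this
  set φ₀ : LinearMap.range Tv →ₗ[ℝ] F :=
    ((Tv.ker.liftQ Tu hker).comp Tv.quotKerEquivRange.symm.toLinearMap) with hφ₀
  have hap : ∀ c : κ → ℝ, φ₀ ⟨Tv c, LinearMap.mem_range_self _ c⟩ = Tu c := by
    intro c
    have h1 : Tv.quotKerEquivRange.symm ⟨Tv c, LinearMap.mem_range_self _ c⟩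
        = Submodule.Quotient.mk c := by
      rw [LinearEquiv.symm_apply_eq]
      exact Subtype.ext (Tv.quotKerEquivRange_apply_mk c)
    rw [hφ₀]
    simp [h1]
  refine ⟨⟨φ₀, ?_⟩, hap⟩
  rintro ⟨x, c, rfl⟩
  rw [hap c]
  exact hnorm c

end Helpers

open scoped MatrixOrder in
theorem psd_aux {ι : Type*} [DecidableEq ι] (V₁ V₂ : Finset ι)
    (X₁ : Matrix {a // a ∈ V₁} {a // a ∈ V₁} ℝ)
    (X₂ : Matrix {a // a ∈ V₂} {a // a ∈ V₂} ℝ)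
    (h₁ : X₁.PosSemidef) (h₂ : X₂.PosSemidef)
    (hagree : ∀ (a b : ι) (ha₁ : a ∈ V₁) (ha₂ : a ∈ V₂) (hb₁ : b ∈ V₁) (hb₂ : b ∈ V₂),
      X₁ ⟨a, ha₁⟩ ⟨b, hb₁⟩ = X₂ ⟨a, ha₂⟩ ⟨b, hb₂⟩)
    (hle : X₂.rank ≤ X₁.rank) :
    ∃ X : Matrix {a // a ∈ V₁ ∪ V₂} {a // a ∈ V₁ ∪ V₂} ℝ,
      X.PosSemidef ∧
      (∀ (a b : ι) (ha : a ∈ V₁) (hb : b ∈ V₁),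
        X ⟨a, Finset.mem_union_left _ ha⟩ ⟨b, Finset.mem_union_left _ hb⟩
          = X₁ ⟨a, ha⟩ ⟨b, hb⟩) ∧
      (∀ (a b : ι) (ha : a ∈ V₂) (hb : b ∈ V₂),
        X ⟨a, Finset.mem_union_right _ ha⟩ ⟨b, Finset.mem_union_right _ hb⟩
          = X₂ ⟨a, ha⟩ ⟨b, hb⟩) ∧
      X.rank = max X₁.rank X₂.rank := by
  classical
  -- index embeddings
  set n := {a // a ∈ V₁ ∪ V₂} with hn
  let e₁ : {a // a ∈ V₁} ↪ n :=
    ⟨fun a => ⟨a.1, Finset.mem_union_left _ a.2⟩, by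
      intro a b hab
      have := congrArg Subtype.val hab
      exact Subtype.ext this⟩
  let e₂ : {a // a ∈ V₂} ↪ n :=
    ⟨fun a => ⟨a.1, Finset.mem_union_right _ a.2⟩, by
      intro a b hab
      have := congrArg Subtype.val hab
      exact Subtype.ext this⟩
  set C₁ := CFC.sqrt X₁ with hC₁def
  set C₂ := CFC.sqrt X₂ with hC₂def
  have hC₁t : C₁ᵀ = C₁ := by
    rw [← Matrix.conjTranspose_eq_transpose_of_trivial]
    exact (Matrix.nonneg_iff_posSemidef.mp (CFC.sqrt_nonneg X₁)).1
  have hC₂t : C₂ᵀ = C₂ := by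
    rw [← Matrix.conjTranspose_eq_transpose_of_trivial]
    exact (Matrix.nonneg_iff_posSemidef.mp (CFC.sqrt_nonneg X₂)).1
  have hC₁m : C₁ * C₁ = X₁ := CFC.sqrt_mul_sqrt_self X₁ (Matrix.nonneg_iff_posSemidef.mpr h₁)
  have hC₂m : C₂ * C₂ = X₂ := CFC.sqrt_mul_sqrt_self X₂ (Matrix.nonneg_iff_posSemidef.mpr h₂)
  let ℓ₁ : ({a // a ∈ V₁} → ℝ) ≃ₗ[ℝ] EuclideanSpace ℝ {a // a ∈ V₁} :=
    (WithLp.linearEquiv 2 ℝ ({a // a ∈ V₁} → ℝ)).symm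
  let ℓ₂ : ({a // a ∈ V₂} → ℝ) ≃ₗ[ℝ] EuclideanSpace ℝ {a // a ∈ V₂} :=
    (WithLp.linearEquiv 2 ℝ ({a // a ∈ V₂} → ℝ)).symm
  let u : {a // a ∈ V₁} → EuclideanSpace ℝ n := fun a => zeroExtendLI e₁ (ℓ₁ (fun i => C₁ i a))
  let v : {a // a ∈ V₂} → EuclideanSpace ℝ n := fun a => zeroExtendLI e₂ (ℓ₂ (fun i => C₂ i a))
  have hip₁ : ∀ (f g : {a // a ∈ V₁} → ℝ), (inner ℝ (ℓ₁ f) (ℓ₁ g) : ℝ) = ∑ i, f i * g i := by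
    intro f g
    simp [ℓ₁, PiLp.inner_apply, RCLike.inner_apply, mul_comm]
  have hip₂ : ∀ (f g : {a // a ∈ V₂} → ℝ), (inner ℝ (ℓ₂ f) (ℓ₂ g) : ℝ) = ∑ i, f i * g i := by
    intro f g
    simp [ℓ₂, PiLp.inner_apply, RCLike.inner_apply, mul_comm]
  have hu : ∀ a b, (inner ℝ (u a) (u b) : ℝ) = X₁ a b := by
    intro a b
    rw [show u a = zeroExtendLI e₁ (ℓ₁ (fun i => C₁ i a)) from rfl,
      show u b = zeroExtendLI e₁ (ℓ₁ (fun i => C₁ i b)) from rfl,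
      LinearIsometry.inner_map_map, hip₁]
    calc ∑ i, C₁ i a * C₁ i b = (C₁ᵀ * C₁) a b := by
          simp [Matrix.mul_apply, Matrix.transpose_apply]
      _ = X₁ a b := by rw [hC₁t, hC₁m]
  have hv : ∀ a b, (inner ℝ (v a) (v b) : ℝ) = X₂ a b := by
    intro a b
    rw [show v a = zeroExtendLI e₂ (ℓ₂ (fun i => C₂ i a)) from rfl,
      show v b = zeroExtendLI e₂ (ℓ₂ (fun i => C₂ i b)) from rfl,
      LinearIsometry.inner_map_map, hip₂]
    calc ∑ i, C₂ i a * C₂ i b = (C₂ᵀ * C₂) a b := by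
          simp [Matrix.mul_apply, Matrix.transpose_apply]
      _ = X₂ a b := by rw [hC₂t, hC₂m]
  -- submodules
  set U : Submodule ℝ (EuclideanSpace ℝ n) :=
    LinearMap.range (Fintype.linearCombination ℝ u) with hUdef
  set S : Submodule ℝ (EuclideanSpace ℝ n) :=
    LinearMap.range (Fintype.linearCombination ℝ v) with hSdef
  have memU : ∀ a, u a ∈ U := fun a => ⟨Pi.single a 1, by simp⟩
  have memS : ∀ a, v a ∈ S := fun a => ⟨Pi.single a 1, by simp⟩
  -- intersection index
  let p : {a // a ∈ V₁ ∩ V₂} → {a // a ∈ V₁} := fun a => ⟨a.1, (Finset.mem_inter.mp a.2).1⟩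
  let q : {a // a ∈ V₁ ∩ V₂} → {a // a ∈ V₂} := fun a => ⟨a.1, (Finset.mem_inter.mp a.2).2⟩
  let vS : {a // a ∈ V₂} → S := fun a => ⟨v a, memS a⟩
  let uU : {a // a ∈ V₁ ∩ V₂} → U := fun a => ⟨u (p a), memU (p a)⟩
  have hgram : ∀ a b, (inner ℝ (uU a) (uU b) : ℝ) = inner ℝ ((vS ∘ q) a) ((vS ∘ q) b) := by
    intro a b
    rw [show (inner ℝ (uU a) (uU b) : ℝ) = inner ℝ (u (p a)) (u (p b)) from rfl,
      show (inner ℝ ((vS ∘ q) a) ((vS ∘ q) b) : ℝ) = inner ℝ (v (q a)) (v (q b)) from rfl,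
      hu, hv]
    exact hagree a.1 b.1 _ _ _ _
  set WS : Submodule ℝ S := LinearMap.range (Fintype.linearCombination ℝ (vS ∘ q)) with hWSdef
  obtain ⟨φ, hφ⟩ := exists_isometry_of_gram_eq uU (vS ∘ q) hgram
  -- finrank computations
  have hTu : Fintype.linearCombination ℝ u
      = ((zeroExtendLI e₁).toLinearMap.comp ℓ₁.toLinearMap).comp C₁.mulVecLin := by
    apply LinearMap.ext
    intro c
    have hmv : (C₁ *ᵥ c) = ∑ a, c a • (fun i => C₁ i a) := by
      funext i
      simp [Matrix.mulVec, dotProduct, Finset.sum_apply, mul_comm]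
    simp only [LinearMap.comp_apply, Matrix.mulVecLin_apply, hmv, map_sum,
      Fintype.linearCombination_apply, LinearIsometry.coe_toLinearMap]
    refine Finset.sum_congr rfl fun a _ => ?_
    rw [_root_.map_smul, LinearIsometry.map_smul]
    rfl
  have hTv : Fintype.linearCombination ℝ v
      = ((zeroExtendLI e₂).toLinearMap.comp ℓ₂.toLinearMap).comp C₂.mulVecLin := by
    apply LinearMap.ext
    intro c
    have hmv : (C₂ *ᵥ c) = ∑ a, c a • (fun i => C₂ i a) := by
      funext i
      simp [Matrix.mulVec, dotProduct, Finset.sum_apply, mul_comm]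
    simp only [LinearMap.comp_apply, Matrix.mulVecLin_apply, hmv, map_sum,
      Fintype.linearCombination_apply, LinearIsometry.coe_toLinearMap]
    refine Finset.sum_congr rfl fun a _ => ?_
    rw [_root_.map_smul, LinearIsometry.map_smul]
    rfl
  have hinj₁ : Function.Injective ((zeroExtendLI e₁).toLinearMap.comp ℓ₁.toLinearMap) := by
    rw [LinearMap.coe_comp]
    refine Function.Injective.comp ?_ ℓ₁.injective
    exact (zeroExtendLI e₁).injective
  have hinj₂ : Function.Injective ((zeroExtendLI e₂).toLinearMap.comp ℓ₂.toLinearMap) := by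
    rw [LinearMap.coe_comp]
    refine Function.Injective.comp ?_ ℓ₂.injective
    exact (zeroExtendLI e₂).injective
  have hUr : finrank ℝ U = X₁.rank := by
    have h1 : U = Submodule.map ((zeroExtendLI e₁).toLinearMap.comp ℓ₁.toLinearMap)
        (LinearMap.range C₁.mulVecLin) := by
      rw [hUdef, hTu, LinearMap.range_comp]
    have h2 : finrank ℝ U = finrank ℝ (LinearMap.range C₁.mulVecLin) := by
      rw [h1]
      exact (Submodule.equivMapOfInjective _ hinj₁ _).symm.finrank_eq
    have h3 : X₁.rank = C₁.rank := by
      have : X₁.rank = (C₁ᵀ * C₁).rank := by rw [hC₁t, hC₁m]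
      rw [this, Matrix.rank_transpose_mul_self]
    rw [h2, h3]
    rfl
  have hSr : finrank ℝ S = X₂.rank := by
    have h1 : S = Submodule.map ((zeroExtendLI e₂).toLinearMap.comp ℓ₂.toLinearMap)
        (LinearMap.range C₂.mulVecLin) := by
      rw [hSdef, hTv, LinearMap.range_comp]
    have h2 : finrank ℝ S = finrank ℝ (LinearMap.range C₂.mulVecLin) := by
      rw [h1]
      exact (Submodule.equivMapOfInjective _ hinj₂ _).symm.finrank_eq
    have h3 : X₂.rank = C₂.rank := by
      have : X₂.rank = (C₂ᵀ * C₂).rank := by rw [hC₂t, hC₂m]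
      rw [this, Matrix.rank_transpose_mul_self]
    rw [h2, h3]
    rfl
  have hdimle : finrank ℝ S ≤ finrank ℝ U := by rw [hSr, hUr]; exact hle
  -- the isometry T : S → H  with range in U extending  v ↦ u  on the overlap
  let β : S →ₗᵢ[ℝ] U := liOfFinrankLe hdimle
  let W'' : Submodule ℝ U := WS.map β.toLinearMap
  let ε : WS ≃ₗ[ℝ] W'' := Submodule.equivMapOfInjective β.toLinearMap β.injective WS
  let εᵢ : WS ≃ₗᵢ[ℝ] W'' :=
    { toLinearEquiv := ε
      norm_map' := by
        intro x
        have h1 : (ε x : U) = β (x : S) := Submodule.coe_equivMapOfInjective_apply _ _ _ _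
        show ‖(ε x : U)‖ = ‖(x : S)‖
        rw [h1]
        exact β.norm_map _ }
  let ψ : W'' →ₗᵢ[ℝ] U := φ.comp εᵢ.symm.toLinearIsometry
  let T : S →ₗᵢ[ℝ] EuclideanSpace ℝ n := U.subtypeₗᵢ.comp (ψ.extend.comp β)
  have hT : ∀ a : {a // a ∈ V₁ ∩ V₂}, T (vS (q a)) = u (p a) := by
    intro a
    have hmem : vS (q a) ∈ WS := by
      refine ⟨Pi.single a 1, ?_⟩
      simp
    have hm2 : β (vS (q a)) ∈ W'' := Submodule.mem_map_of_mem hmem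
    have hεa : εᵢ ⟨vS (q a), hmem⟩ = ⟨β (vS (q a)), hm2⟩ :=
      Subtype.ext (Submodule.coe_equivMapOfInjective_apply _ _ _ _)
    have hsymm : εᵢ.symm ⟨β (vS (q a)), hm2⟩ = ⟨vS (q a), hmem⟩ := by
      rw [← hεa, εᵢ.symm_apply_apply]
    have hφ' : φ ⟨vS (q a), hmem⟩ = uU a := by
      have h5 : (⟨Fintype.linearCombination ℝ (vS ∘ q) (Pi.single a 1),
          LinearMap.mem_range_self _ _⟩ : WS) = ⟨vS (q a), hmem⟩ := by
        refine Subtype.ext ?_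
        simp
      have := hφ (Pi.single a 1)
      rw [h5] at this
      rw [this]
      simp
    have hE : ψ.extend (β (vS (q a))) = ψ ⟨β (vS (q a)), hm2⟩ :=
      ψ.extend_apply ⟨β (vS (q a)), hm2⟩
    calc T (vS (q a)) = ↑(ψ.extend (β (vS (q a)))) := rfl
      _ = ↑(ψ ⟨β (vS (q a)), hm2⟩) := by rw [hE]
      _ = ↑(φ (εᵢ.symm ⟨β (vS (q a)), hm2⟩)) := rfl
      _ = ↑(φ ⟨vS (q a), hmem⟩) := by rw [hsymm]
      _ = ↑(uU a) := by rw [hφ']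
      _ = u (p a) := rfl
  -- the completed family of vectors
  let w : n → EuclideanSpace ℝ n := fun i =>
    if h : ↑i ∈ V₂ then T (vS ⟨↑i, h⟩)
    else u ⟨↑i, (Finset.mem_union.mp i.2).resolve_right h⟩
  have hw₂ : ∀ (i : n) (h : ↑i ∈ V₂), w i = T (vS ⟨↑i, h⟩) := by
    intro i h
    exact dif_pos h
  have hw₁ : ∀ (i : n) (h : ↑i ∈ V₁), w i = u ⟨↑i, h⟩ := by
    intro i h
    by_cases h2 : ↑i ∈ V₂
    · rw [hw₂ i h2]
      exact hT ⟨↑i, Finset.mem_inter.mpr ⟨h, h2⟩⟩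
    · exact dif_neg h2
  let B : Matrix n n ℝ := Matrix.of fun k i => w i k
  have hent : ∀ i j : n, (Bᴴ * B) i j = (inner ℝ (w i) (w j) : ℝ) := by
    intro i j
    simp [Matrix.mul_apply, Matrix.conjTranspose_apply, B, PiLp.inner_apply, RCLike.inner_apply]
    exact Finset.sum_congr rfl fun _ _ => mul_comm _ _
  refine ⟨Bᴴ * B, Matrix.posSemidef_conjTranspose_mul_self B, ?_, ?_, ?_⟩
  · intro a b ha hb
    rw [hent, hw₁ _ ha, hw₁ _ hb, hu]
  · intro a b ha hb
    rw [hent, hw₂ _ ha, hw₂ _ hb,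
      show (inner ℝ (T (vS ⟨a, ha⟩)) (T (vS ⟨b, hb⟩)) : ℝ) = inner ℝ (vS ⟨a, ha⟩) (vS ⟨b, hb⟩) from
        T.inner_map_map _ _,
      show (inner ℝ (vS ⟨a, ha⟩) (vS ⟨b, hb⟩) : ℝ) = inner ℝ (v ⟨a, ha⟩) (v ⟨b, hb⟩) from rfl, hv]
  · -- rank computation
    have hBlin : B.mulVecLin
        = (WithLp.linearEquiv 2 ℝ (n → ℝ)).toLinearMap ∘ₗ Fintype.linearCombination ℝ w := by
      apply LinearMap.ext
      intro c
      funext k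
      simp only [Matrix.mulVecLin_apply, LinearMap.comp_apply, LinearEquiv.coe_coe,
        Fintype.linearCombination_apply, map_sum, _root_.map_smul]
      simp [Matrix.mulVec, dotProduct, B, Finset.sum_apply, mul_comm]
    have hrange : LinearMap.range (Fintype.linearCombination ℝ w) = U := by
      apply le_antisymm
      · rw [Fintype.range_linearCombination, Submodule.span_le]
        rintro x ⟨i, rfl⟩
        by_cases h2 : ↑i ∈ V₂
        · rw [hw₂ i h2]
          exact Submodule.coe_mem (ψ.extend (β (vS ⟨↑i, h2⟩)))
        · have hh1 : ↑i ∈ V₁ := (Finset.mem_union.mp i.2).resolve_right h2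
          rw [hw₁ i hh1]
          exact memU _
      · rw [hUdef, Fintype.range_linearCombination, Fintype.range_linearCombination]
        apply Submodule.span_mono
        rintro x ⟨a, rfl⟩
        exact ⟨e₁ a, hw₁ (e₁ a) a.2⟩
    have h9 : (Bᴴ * B).rank = B.rank := Matrix.rank_conjTranspose_mul_self B
    have h10 : B.rank = finrank ℝ (LinearMap.range B.mulVecLin) := rfl
    rw [h9, h10, hBlin, LinearMap.range_comp, hrange]
    have h11 : finrank ℝ (Submodule.map ((WithLp.linearEquiv 2 ℝ (n → ℝ)) :
        EuclideanSpace ℝ n →ₗ[ℝ] (n → ℝ)) U) = finrank ℝ U :=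
      (Submodule.equivMapOfInjective _ (WithLp.linearEquiv 2 ℝ (n → ℝ)).injective U).symm.finrank_eq
    rw [h11, hUr, max_eq_left hle]

theorem psd_common_completion {ι : Type*} [DecidableEq ι] (V₁ V₂ : Finset ι)
    (X₁ : Matrix {a // a ∈ V₁} {a // a ∈ V₁} ℝ)
    (X₂ : Matrix {a // a ∈ V₂} {a // a ∈ V₂} ℝ)
    (h₁ : X₁.PosSemidef) (h₂ : X₂.PosSemidef)
    (hagree : ∀ (a b : ι) (ha₁ : a ∈ V₁) (ha₂ : a ∈ V₂) (hb₁ : b ∈ V₁) (hb₂ : b ∈ V₂),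
      X₁ ⟨a, ha₁⟩ ⟨b, hb₁⟩ = X₂ ⟨a, ha₂⟩ ⟨b, hb₂⟩) :
    ∃ X : Matrix {a // a ∈ V₁ ∪ V₂} {a // a ∈ V₁ ∪ V₂} ℝ,
      X.PosSemidef ∧
      (∀ (a b : ι) (ha : a ∈ V₁) (hb : b ∈ V₁),
        X ⟨a, Finset.mem_union_left _ ha⟩ ⟨b, Finset.mem_union_left _ hb⟩
          = X₁ ⟨a, ha⟩ ⟨b, hb⟩) ∧
      (∀ (a b : ι) (ha : a ∈ V₂) (hb : b ∈ V₂),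
        X ⟨a, Finset.mem_union_right _ ha⟩ ⟨b, Finset.mem_union_right _ hb⟩
          = X₂ ⟨a, ha⟩ ⟨b, hb⟩) ∧
      X.rank = max X₁.rank X₂.rank := by
  rcases le_total X₂.rank X₁.rank with hle | hle
  · exact psd_aux V₁ V₂ X₁ X₂ h₁ h₂ hagree hle
  · obtain ⟨X', hpsd, hE₂, hE₁, hrk⟩ := psd_aux V₂ V₁ X₂ X₁ h₂ h₁
      (fun a b ha₂ ha₁ hb₂ hb₁ => (hagree a b ha₁ ha₂ hb₁ hb₂).symm) hle
    let e : {a // a ∈ V₁ ∪ V₂} ≃ {a // a ∈ V₂ ∪ V₁} :=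
      Equiv.subtypeEquivRight (fun a => by rw [Finset.union_comm])
    refine ⟨X'.submatrix e e, hpsd.submatrix e, ?_, ?_, ?_⟩
    · intro a b ha hb
      exact hE₁ a b ha hb
    · intro a b ha hb
      exact hE₂ a b ha hb
    · rw [Matrix.rank_submatrix X' e e, hrk, max_comm]
end

section
/- Let G = (V, E) be a graph on n vertices, x ∈ ℝᴱ a point in the projected elliptope E(G), and fib(x) = {X ∈ Eₙ : πₑ(X) = x} its fiber. Then x is an extreme point of E(G) if and only if fib(x) is a face of the elliptope Eₙ. -/
open Matrix

def elliptope (n : ℕ) : Set (Matrix (Fin n) (Fin n) ℝ) :=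
  {X | X.PosSemidef ∧ ∀ i, X i i = 1}

def projE (n : ℕ) (G : SimpleGraph (Fin n)) [DecidableRel G.Adj]
    (X : Matrix (Fin n) (Fin n) ℝ) : Fin n → Fin n → ℝ :=
  fun a b => if G.Adj a b then X a b else 0

lemma psd_smul {n : ℕ} {A : Matrix (Fin n) (Fin n) ℝ} (hA : A.PosSemidef) {a : ℝ}
    (ha : 0 ≤ a) : (a • A).PosSemidef := by
  constructor
  · unfold Matrix.IsHermitian
    rw [conjTranspose_smul, hA.1]
    simp
  · intro x
    exact (hA.smul ha).2 x

lemma comb_mem_elliptope {n : ℕ} {Y Z : Matrix (Fin n) (Fin n) ℝ} (hY : Y ∈ elliptope n)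
    (hZ : Z ∈ elliptope n) {a b : ℝ} (ha : 0 ≤ a) (hb : 0 ≤ b) (hab : a + b = 1) :
    a • Y + b • Z ∈ elliptope n := by
  refine ⟨(psd_smul hY.1 ha).add (psd_smul hZ.1 hb), fun i => ?_⟩
  simp [Matrix.add_apply, Matrix.smul_apply, hY.2 i, hZ.2 i, hab]

lemma projE_comb (n : ℕ) (G : SimpleGraph (Fin n)) [DecidableRel G.Adj]
    (Y Z : Matrix (Fin n) (Fin n) ℝ) (a b : ℝ) :
    projE n G (a • Y + b • Z) = a • projE n G Y + b • projE n G Z := by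
  funext i j
  simp only [projE, Pi.add_apply, Pi.smul_apply, Matrix.add_apply, Matrix.smul_apply,
    smul_eq_mul]
  split <;> simp

theorem extreme_iff_fiber_face (n : ℕ) (G : SimpleGraph (Fin n)) [DecidableRel G.Adj]
    (x : Fin n → Fin n → ℝ) (hx : x ∈ projE n G '' elliptope n) :
    x ∈ Set.extremePoints ℝ (projE n G '' elliptope n) ↔
      IsExtreme ℝ (elliptope n) {X ∈ elliptope n | projE n G X = x} := by
  constructor
  · rintro ⟨-, hext⟩
    refine ⟨fun X hX => hX.1, ?_⟩
    rintro Y hY Z hZ X ⟨hXe, hXx⟩ ⟨a, b, ha, hb, hab, hcomb⟩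
    have hYim : projE n G Y ∈ projE n G '' elliptope n := ⟨Y, hY, rfl⟩
    have hZim : projE n G Z ∈ projE n G '' elliptope n := ⟨Z, hZ, rfl⟩
    have hxseg : x ∈ openSegment ℝ (projE n G Y) (projE n G Z) := by
      refine ⟨a, b, ha, hb, hab, ?_⟩
      rw [← projE_comb, hcomb, hXx]
    have h1 := hext hYim hZim hxseg
    exact ⟨hY, h1⟩
  · rintro ⟨-, hface⟩
    refine ⟨hx, ?_⟩
    rintro u ⟨Y, hY, rfl⟩ v ⟨Z, hZ, rfl⟩ ⟨a, b, ha, hb, hab, hcomb⟩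
    have hX : a • Y + b • Z ∈ elliptope n := comb_mem_elliptope hY hZ ha.le hb.le hab
    have hXx : projE n G (a • Y + b • Z) = x := by rw [projE_comb, hcomb]
    have hseg : a • Y + b • Z ∈ openSegment ℝ Y Z := ⟨a, b, ha, hb, hab, rfl⟩
    have h1 := hface hY hZ ⟨hX, hXx⟩ hseg
    exact h1.2
end

section
/- Let X ∈ Eₙ be a correlation matrix of rank r with Gram representation u₁, …, uₙ ∈ ℝʳ. If X is an extreme point of the elliptope Eₙ, then the matrices u₁u₁ᵀ, …, uₙuₙᵀ span the full space of r×r symmetric matrices; in particular r(r+1)/2 ≤ n. -/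
open Matrix

section Aux

open RealInnerProductSpace

/-- Matrices as Euclidean space. -/
noncomputable def matE (r : ℕ) :
    Matrix (Fin r) (Fin r) ℝ ≃ₗ[ℝ] EuclideanSpace ℝ (Fin r × Fin r) where
  toFun A := WithLp.toLp 2 fun p : Fin r × Fin r => A p.1 p.2
  invFun x := fun i j => x (i, j)
  map_add' _ _ := rfl
  map_smul' _ _ := rfl
  left_inv _ := rfl
  right_inv _ := rfl

/-- The subspace of symmetric "vectors". -/
def symmE (r : ℕ) : Submodule ℝ (EuclideanSpace ℝ (Fin r × Fin r)) where
  carrier := {x | ∀ i j, x (i, j) = x (j, i)}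
  add_mem' hx hy i j := by simp [hx i j, hy i j]
  zero_mem' := by intro i j; rfl
  smul_mem' c x hx i j := by simp [hx i j]

theorem cancel_left {n r : ℕ} {m : Type*} [Fintype m]
    (U : Matrix (Fin n) (Fin r) ℝ)
    (hU : ∀ x : Fin r → ℝ, U *ᵥ x = 0 → x = 0)
    (M : Matrix (Fin r) m ℝ) (h : U * M = 0) : M = 0 := by
  ext k j
  have hcol : U *ᵥ (fun i => M i j) = 0 := by
    funext i
    have := congrFun (congrFun h i) j
    simpa [Matrix.mul_apply, Matrix.mulVec, dotProduct] using this
  simpa using congrFun (hU _ hcol) k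

theorem quad_bound {r : ℕ} (A : Matrix (Fin r) (Fin r) ℝ) (x : Fin r → ℝ) :
    |x ⬝ᵥ (A *ᵥ x)| ≤ (∑ p : Fin r × Fin r, |A p.1 p.2|) * (x ⬝ᵥ x) := by
  have h1 : x ⬝ᵥ (A *ᵥ x) = ∑ p : Fin r × Fin r, A p.1 p.2 * (x p.1 * x p.2) := by
    rw [Fintype.sum_prod_type]
    simp only [dotProduct, Matrix.mulVec, Finset.mul_sum]
    apply Finset.sum_congr rfl; intro a _
    apply Finset.sum_congr rfl; intro b _
    ring
  rw [h1, Finset.sum_mul]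
  refine (Finset.abs_sum_le_sum_abs _ _).trans (Finset.sum_le_sum fun p _ => ?_)
  rw [abs_mul]
  refine mul_le_mul_of_nonneg_left ?_ (abs_nonneg _)
  have h2 : |x p.1 * x p.2| ≤ (x p.1 ^ 2 + x p.2 ^ 2) / 2 := by
    rw [abs_mul]
    nlinarith [sq_nonneg (|x p.1| - |x p.2|), sq_abs (x p.1), sq_abs (x p.2)]
  have h3 : ∀ k : Fin r, x k ^ 2 ≤ x ⬝ᵥ x := by
    intro k
    have : x ⬝ᵥ x = ∑ l, x l ^ 2 := by simp [dotProduct, sq]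
    rw [this]
    exact Finset.single_le_sum (fun l _ => sq_nonneg (x l)) (Finset.mem_univ k)
  linarith [h3 p.1, h3 p.2]

end Aux

open RealInnerProductSpace

theorem extreme_gram_span (n r : ℕ) (X : Matrix (Fin n) (Fin n) ℝ)
    (hX : X ∈ elliptope n) (u : Fin n → (Fin r → ℝ))
    (hGram : ∀ i j, X i j = u i ⬝ᵥ u j) (hrank : X.rank = r)
    (hext : X ∈ Set.extremePoints ℝ (elliptope n)) :
    (∀ Z : Matrix (Fin r) (Fin r) ℝ, Z.IsSymm →
      Z ∈ Submodule.span ℝ (Set.range fun i => Matrix.vecMulVec (u i) (u i))) ∧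
    r * (r + 1) / 2 ≤ n := by
  obtain ⟨hpsd, hdiag⟩ := hX
  set U : Matrix (Fin n) (Fin r) ℝ := Matrix.of u with hUdef
  have hXU : X = U * Uᵀ := by
    ext i j
    simp [Matrix.mul_apply, hGram i j, dotProduct, hUdef]
  -- U has trivial kernel
  have hUrank : U.rank = r := by
    have := Matrix.rank_self_mul_transpose U
    rw [← hXU, hrank] at this; omega
  have hUinj : ∀ x : Fin r → ℝ, U *ᵥ x = 0 → x = 0 := by
    have hinj : Function.Injective U.mulVecLin := by
      rw [← LinearMap.ker_eq_bot]
      have h1 := LinearMap.finrank_range_add_finrank_ker U.mulVecLin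
      rw [Module.finrank_fintype_fun_eq_card, Fintype.card_fin] at h1
      have h2 : Module.finrank ℝ (LinearMap.range U.mulVecLin) = r := hUrank
      rw [h2] at h1
      exact Submodule.finrank_eq_zero.mp (by omega)
    intro x hx
    exact hinj (by simpa using hx)
  -- the key computation (U * B * Uᵀ) i j = uᵢ ⬝ B uⱼ
  have hconj : ∀ (B : Matrix (Fin r) (Fin r) ℝ) (i j : Fin n),
      (U * B * Uᵀ) i j = u i ⬝ᵥ (B *ᵥ u j) := by
    intro B i j
    simp only [Matrix.mul_apply, Matrix.transpose_apply, Matrix.mulVec, dotProduct,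
      Finset.sum_mul, Finset.mul_sum, hUdef, Matrix.of_apply]
    rw [Finset.sum_comm]
    apply Finset.sum_congr rfl; intro k _
    apply Finset.sum_congr rfl; intro l _
    ring
  -- The key lemma from extremality
  have key : ∀ A : Matrix (Fin r) (Fin r) ℝ, A.IsSymm →
      (∀ i, u i ⬝ᵥ (A *ᵥ u i) = 0) → A = 0 := by
    intro A hAsymm hAdiag
    set C : ℝ := ∑ p : Fin r × Fin r, |A p.1 p.2| with hC
    have hC0 : 0 ≤ C := Finset.sum_nonneg fun p _ => abs_nonneg _
    set ε : ℝ := (C + 1)⁻¹ with hε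
    have hεpos : 0 < ε := by positivity
    have hεC : ε * C ≤ 1 := by
      rw [hε, inv_mul_le_iff₀ (by linarith)]; linarith
    have hxx : ∀ x : Fin r → ℝ, 0 ≤ x ⬝ᵥ x := fun x =>
      Finset.sum_nonneg fun k _ => mul_self_nonneg _
    -- 1 ± ε A is PSD
    have hpsd1 : ∀ t : ℝ, |t| ≤ ε → ((1 : Matrix (Fin r) (Fin r) ℝ) + t • A).PosSemidef := by
      intro t ht
      rw [posSemidef_iff_dotProduct_mulVec]
      constructor
      · show (1 + t • A)ᴴ = _
        rw [conjTranspose_eq_transpose_of_trivial, transpose_add, transpose_one,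
          transpose_smul, hAsymm.eq]
      · intro x
        have hstar : star x = x := by simp
        have hmv : (1 + t • A) *ᵥ x = x + t • (A *ᵥ x) := by
          rw [Matrix.add_mulVec, Matrix.one_mulVec, Matrix.smul_mulVec]
        rw [hstar, hmv, dotProduct_add, dotProduct_smul]
        have hq := quad_bound A x
        rw [← hC] at hq
        have habs : |t * (x ⬝ᵥ (A *ᵥ x))| ≤ ε * (C * (x ⬝ᵥ x)) := by
          rw [abs_mul]
          exact mul_le_mul ht hq (abs_nonneg _) (le_of_lt hεpos)
        have h5 : -(ε * (C * (x ⬝ᵥ x))) ≤ t * (x ⬝ᵥ (A *ᵥ x)) := neg_le_of_abs_le habs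
        have h6 : ε * (C * (x ⬝ᵥ x)) ≤ x ⬝ᵥ x := by
          have := mul_le_of_le_one_left (hxx x) hεC
          nlinarith [hxx x]
        simp only [smul_eq_mul]
        linarith
    set D : Matrix (Fin n) (Fin n) ℝ := U * A * Uᵀ with hD
    have hYp : X + ε • D = U * (1 + ε • A) * Uᵀ := by
      rw [hXU, hD, Matrix.mul_add, Matrix.add_mul, Matrix.mul_one, Matrix.mul_smul,
        Matrix.smul_mul]
    have hYm : X - ε • D = U * (1 - ε • A) * Uᵀ := by
      rw [hXU, hD, Matrix.mul_sub, Matrix.sub_mul, Matrix.mul_one, Matrix.mul_smul,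
        Matrix.smul_mul]
    have hmemp : X + ε • D ∈ elliptope n := by
      constructor
      · rw [hYp]
        have := (hpsd1 ε (by rw [abs_of_pos hεpos])).mul_mul_conjTranspose_same U
        rwa [conjTranspose_eq_transpose_of_trivial] at this
      · intro i
        rw [hYp]
        rw [hconj (1 + ε • A) i i]
        rw [Matrix.add_mulVec, Matrix.one_mulVec, Matrix.smul_mulVec,
          dotProduct_add, dotProduct_smul, hAdiag i]
        have : u i ⬝ᵥ u i = 1 := by rw [← hGram i i]; exact hdiag i
        simp [this]
    have hmemm : X - ε • D ∈ elliptope n := by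
      constructor
      · rw [hYm]
        have h1ε : |(-ε)| ≤ ε := by rw [abs_neg, abs_of_pos hεpos]
        have := (hpsd1 (-ε) h1ε).mul_mul_conjTranspose_same U
        rw [conjTranspose_eq_transpose_of_trivial] at this
        have heq : (1 : Matrix (Fin r) (Fin r) ℝ) + (-ε) • A = 1 - ε • A := by
          rw [neg_smul, ← sub_eq_add_neg]
        rwa [heq] at this
      · intro i
        rw [hYm]
        rw [hconj (1 - ε • A) i i]
        rw [Matrix.sub_mulVec, Matrix.one_mulVec, Matrix.smul_mulVec,
          dotProduct_sub, dotProduct_smul, hAdiag i]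
        have : u i ⬝ᵥ u i = 1 := by rw [← hGram i i]; exact hdiag i
        simp [this]
    have hseg : X ∈ openSegment ℝ (X + ε • D) (X - ε • D) := by
      refine ⟨1/2, 1/2, by norm_num, by norm_num, by norm_num, ?_⟩
      rw [smul_add, smul_sub]
      abel_nf
      module
    have hXeq := (hext.2 hmemp hmemm hseg)
    have hD0 : D = 0 := by
      have hεD : ε • D = 0 := by rwa [add_eq_left] at hXeq
      exact (smul_eq_zero.mp hεD).resolve_left (ne_of_gt hεpos)
    -- now conclude A = 0
    have h1 : U * (A * Uᵀ) = 0 := by rw [← Matrix.mul_assoc, ← hD, hD0]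
    have h2 : A * Uᵀ = 0 := cancel_left U hUinj _ h1
    have h3 : U * Aᵀ = 0 := by
      have := congrArg Matrix.transpose h2
      rwa [Matrix.transpose_mul, Matrix.transpose_transpose, Matrix.transpose_zero] at this
    have h4 : Aᵀ = 0 := cancel_left U hUinj _ h3
    rw [← hAsymm.eq, h4]
  -- Part 1: span of the uᵢuᵢᵀ is everything symmetric
  have part1 : ∀ Z : Matrix (Fin r) (Fin r) ℝ, Z.IsSymm →
      Z ∈ Submodule.span ℝ (Set.range fun i => Matrix.vecMulVec (u i) (u i)) := by
    set e := matE r with he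
    set f : Fin n → Matrix (Fin r) (Fin r) ℝ := fun i => Matrix.vecMulVec (u i) (u i) with hf
    set P : Submodule ℝ (EuclideanSpace ℝ (Fin r × Fin r)) :=
      Submodule.span ℝ (Set.range fun i => e (f i)) with hP
    have hPW : P ≤ symmE r := by
      rw [hP, Submodule.span_le]
      rintro _ ⟨i, rfl⟩
      intro a b
      show Matrix.vecMulVec (u i) (u i) a b = Matrix.vecMulVec (u i) (u i) b a
      simp [Matrix.vecMulVec_apply, mul_comm]
    have hmemP : ∀ Z : Matrix (Fin r) (Fin r) ℝ, Z.IsSymm → e Z ∈ P := by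
      intro Z hZ
      by_contra hnot
      obtain ⟨y, hy, q, hq, hsum⟩ := P.exists_add_mem_mem_orthogonal (e Z)
      have hq0 : q ≠ 0 := by
        rintro rfl
        rw [add_zero] at hsum
        exact hnot (hsum ▸ hy)
      set A : Matrix (Fin r) (Fin r) ℝ := e.symm q with hA
      have hqW : q ∈ symmE r := by
        have hZW : e Z ∈ symmE r := by
          intro a b
          show Z a b = Z b a
          exact (congrFun (congrFun hZ b) a).symm ▸ rfl
        have : q = e Z - y := by rw [hsum]; abel
        rw [this]
        exact Submodule.sub_mem _ hZW (hPW hy)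
      have hAsymm : A.IsSymm := by
        ext a b
        show q (b, a) = q (a, b)
        exact hqW b a
      have hAdiag : ∀ i, u i ⬝ᵥ (A *ᵥ u i) = 0 := by
        intro i
        have hgen : e (f i) ∈ P := Submodule.subset_span ⟨i, rfl⟩
        have hinner : ⟪e (f i), q⟫ = 0 := (Submodule.mem_orthogonal P q).mp hq _ hgen
        rw [PiLp.inner_apply] at hinner
        simp only [RCLike.inner_apply, conj_trivial] at hinner
        have : u i ⬝ᵥ (A *ᵥ u i) = ∑ p : Fin r × Fin r, e (f i) p * q p := by
          rw [Fintype.sum_prod_type]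
          simp only [dotProduct, Matrix.mulVec, Finset.mul_sum]
          apply Finset.sum_congr rfl; intro a _
          apply Finset.sum_congr rfl; intro b _
          show u i a * (A a b * u i b) = u i a * u i b * q (a, b)
          have : A a b = q (a, b) := rfl
          rw [this]; ring
        rw [this, ← hinner]
        exact Finset.sum_congr rfl fun p _ => mul_comm _ _
      have : A = 0 := key A hAsymm hAdiag
      exact hq0 (by rw [← e.apply_symm_apply q, ← hA, this, map_zero])
    intro Z hZ
    have h1 : e Z ∈ P := hmemP Z hZ
    have h2 : Submodule.map (e.symm : EuclideanSpace ℝ (Fin r × Fin r) →ₗ[ℝ] Matrix (Fin r) (Fin r) ℝ) P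
        = Submodule.span ℝ (Set.range f) := by
      rw [hP, Submodule.map_span]
      congr 1
      rw [← Set.range_comp]
      ext x
      constructor
      · rintro ⟨i, rfl⟩; exact ⟨i, by simp⟩
      · rintro ⟨i, rfl⟩; exact ⟨i, by simp⟩
    have h3 : e.symm (e Z) ∈ Submodule.map
        (e.symm : EuclideanSpace ℝ (Fin r × Fin r) →ₗ[ℝ] Matrix (Fin r) (Fin r) ℝ) P :=
      Submodule.mem_map_of_mem h1
    rw [h2, e.symm_apply_apply] at h3
    exact h3
  refine ⟨part1, ?_⟩
  -- Part 2: dimension count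
  set f : Fin n → Matrix (Fin r) (Fin r) ℝ := fun i => Matrix.vecMulVec (u i) (u i) with hf
  set P₀ : Submodule ℝ (Matrix (Fin r) (Fin r) ℝ) := Submodule.span ℝ (Set.range f) with hP₀
  let ψ : (Sym2 (Fin r) → ℝ) →ₗ[ℝ] Matrix (Fin r) (Fin r) ℝ :=
    { toFun := fun g => Matrix.of fun i j => g s(i, j)
      map_add' := fun g h => by ext i j; simp
      map_smul' := fun c g => by ext i j; simp }
  have hψrange : ∀ g, ψ g ∈ P₀ := by
    intro g
    apply part1
    ext i j
    simp only [Matrix.transpose_apply]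
    show g s(j, i) = g s(i, j)
    rw [Sym2.eq_swap]
  have hψinj : Function.Injective (ψ.codRestrict P₀ hψrange) := by
    intro g h hgh
    funext s
    induction s using Sym2.ind with
    | _ i j =>
      have h' : ψ g = ψ h := congrArg Subtype.val hgh
      have := congrArg (fun M => M i j) h'
      exact this
  have hle1 : Module.finrank ℝ (Sym2 (Fin r) → ℝ) ≤ Module.finrank ℝ P₀ :=
    LinearMap.finrank_le_finrank_of_injective hψinj
  have hle2 : Module.finrank ℝ P₀ ≤ n := by
    have := finrank_range_le_card (R := ℝ) f
    simpa [Set.finrank] using this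
  have hcard : Module.finrank ℝ (Sym2 (Fin r) → ℝ) = r * (r + 1) / 2 := by
    rw [Module.finrank_fintype_fun_eq_card ℝ, Sym2.card, Fintype.card_fin,
      Nat.choose_two_right]
    simp [Nat.mul_comm]
  omega
end

section
/- For every pair of natural numbers n, r with r(r+1)/2 ≤ n, there exists an extreme point of the elliptope Eₙ whose rank equals r. -/
open Matrix

namespace ExtPtAux

open Matrix

def T (j : ℕ) : ℕ := j.choose 2

lemma T_succ (j : ℕ) : T (j+1) = T j + j := by
  simp [T, Nat.choose_succ_succ, Nat.choose_one_right, Nat.add_comm]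

lemma T_mono : Monotone T := fun _ _ h => Nat.choose_le_choose 2 h

def decode : ℕ → ℕ × ℕ
  | 0 => (0, 1)
  | m+1 => if (decode m).1 + 1 < (decode m).2 then ((decode m).1 + 1, (decode m).2)
           else (0, (decode m).2 + 1)

lemma decode_spec (m : ℕ) : (decode m).1 < (decode m).2 ∧ m = T (decode m).2 + (decode m).1 := by
  induction m with
  | zero => simp [decode, T]
  | succ m ih =>
    obtain ⟨h1, h2⟩ := ih
    rw [decode]
    split
    · next hlt =>
      refine ⟨hlt, ?_⟩
      show m + 1 = T (decode m).2 + ((decode m).1 + 1)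
      omega
    · next hge =>
      refine ⟨Nat.succ_pos _, ?_⟩
      show m + 1 = T ((decode m).2 + 1) + 0
      rw [T_succ]
      omega

lemma rep_unique {i j i' j' : ℕ} (hij : i < j) (hij' : i' < j')
    (h : T j + i = T j' + i') : j = j' ∧ i = i' := by
  have key : ∀ a b a' b' : ℕ, a < b → b < b' → T b + a ≠ T b' + a' := by
    intro a b a' b' hab hbb heq
    have h1 : T b + a < T (b+1) := by rw [T_succ]; omega
    have h2 : T (b+1) ≤ T b' := T_mono hbb
    omega
  rcases lt_trichotomy j j' with hlt | heq | hgt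
  · exact absurd h (key _ _ _ _ hij hlt)
  · subst heq; exact ⟨rfl, by omega⟩
  · exact absurd h.symm (key _ _ _ _ hij' hgt)

lemma decode_encode {i j : ℕ} (hij : i < j) : decode (T j + i) = (i, j) := by
  obtain ⟨h1, h2⟩ := decode_spec (T j + i)
  obtain ⟨hj, hi⟩ := rep_unique h1 hij h2.symm
  have : decode (T j + i) = ((decode (T j + i)).1, (decode (T j + i)).2) := rfl
  rw [this, hi, hj]

lemma decode_snd_lt {m r : ℕ} (hm : m < T r) : (decode m).2 < r := by
  obtain ⟨h1, h2⟩ := decode_spec m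
  by_contra hge
  have := T_mono (Nat.le_of_not_lt hge)
  omega

lemma encode_lt {i j r : ℕ} (hij : i < j) (hjr : j < r) : T j + i < T r := by
  have h1 : T j + i < T (j+1) := by rw [T_succ]; omega
  exact lt_of_lt_of_le h1 (T_mono hjr)

/-! ### vectors -/

noncomputable def s : ℝ := (Real.sqrt 2)⁻¹

lemma s_mul_s : s * s = 1/2 := by
  rw [s, ← mul_inv, Real.mul_self_sqrt (by norm_num)]; norm_num

def bvec (r : ℕ) (i : Fin r) : Fin r → ℝ := fun t => if t = i then 1 else 0

noncomputable def pvec (r : ℕ) (i j : Fin r) : Fin r → ℝ :=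
  fun t => s * (bvec r i t + bvec r j t)

lemma bvec_dot {r : ℕ} (i : Fin r) (f : Fin r → ℝ) : bvec r i ⬝ᵥ f = f i := by
  simp [dotProduct, bvec]

lemma pvec_eq {r : ℕ} (i j : Fin r) : pvec r i j = s • (bvec r i + bvec r j) := rfl

lemma pvec_dot {r : ℕ} (i j : Fin r) (f : Fin r → ℝ) :
    pvec r i j ⬝ᵥ f = s * (f i + f j) := by
  rw [pvec_eq, smul_dotProduct, add_dotProduct, bvec_dot, bvec_dot, smul_eq_mul]

variable (n r : ℕ)

noncomputable def vrow (hr : 0 < r) (k : Fin n) : Fin r → ℝ :=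
  if h : (k : ℕ) < r then bvec r ⟨k, h⟩
  else if h2 : (k : ℕ) - r < T r then
    pvec r ⟨(decode ((k:ℕ) - r)).1, lt_trans (decode_spec _).1 (decode_snd_lt h2)⟩
          ⟨(decode ((k:ℕ) - r)).2, decode_snd_lt h2⟩
  else bvec r ⟨0, hr⟩

variable {n r}
variable (hr : 0 < r) (hn : r + T r ≤ n)

def ρ (i : Fin r) : Fin n := ⟨i, by have := i.2; omega⟩

def π (i j : Fin r) (hij : (i:ℕ) < (j:ℕ)) : Fin n :=
  ⟨r + (T j + i), by have := encode_lt hij j.2; omega⟩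

lemma vrow_rho (i : Fin r) : vrow n r hr (ρ hn i) = bvec r i := by
  rw [vrow, dif_pos (show ((ρ hn i : Fin n) : ℕ) < r from i.2)]
  congr 1

lemma vrow_pi (i j : Fin r) (hij : (i:ℕ) < (j:ℕ)) :
    vrow n r hr (π hn i j hij) = pvec r i j := by
  have hval : ((π hn i j hij : Fin n) : ℕ) = r + (T j + i) := rfl
  have h1 : ¬ ((π hn i j hij : Fin n) : ℕ) < r := by omega
  have hm : ((π hn i j hij : Fin n) : ℕ) - r = T j + i := by omega
  have h2 : ((π hn i j hij : Fin n) : ℕ) - r < T r := by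
    rw [hm]; exact encode_lt hij j.2
  rw [vrow, dif_neg h1, dif_pos h2]
  have hd : decode (((π hn i j hij : Fin n) : ℕ) - r) = ((i:ℕ), (j:ℕ)) := by
    rw [hm]; exact decode_encode hij
  have key : ∀ (i' j' : Fin r), (i':ℕ) = (i:ℕ) → (j':ℕ) = (j:ℕ) → pvec r i' j' = pvec r i j := by
    intro i' j' e1 e2
    rw [show i' = i from Fin.ext e1, show j' = j from Fin.ext e2]
  exact key _ _ (by simp [hd]) (by simp [hd])

lemma vrow_copy (k : Fin n) (hk : r + T r ≤ (k:ℕ)) :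
    vrow n r hr k = bvec r ⟨0, hr⟩ := by
  rw [vrow, dif_neg (by omega), dif_neg (by omega)]

lemma row_cases (k : Fin n) :
    (∃ i : Fin r, k = ρ hn i) ∨
    (∃ (i j : Fin r) (hij : (i:ℕ) < (j:ℕ)), k = π hn i j hij) ∨
    (r + T r ≤ (k:ℕ)) := by
  by_cases h1 : (k:ℕ) < r
  · exact Or.inl ⟨⟨k, h1⟩, Fin.ext rfl⟩
  by_cases h2 : (k:ℕ) - r < T r
  · obtain ⟨hlt, heq⟩ := decode_spec ((k:ℕ) - r)
    have hjr := decode_snd_lt h2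
    refine Or.inr (Or.inl ⟨⟨(decode ((k:ℕ)-r)).1, lt_trans hlt hjr⟩,
      ⟨(decode ((k:ℕ)-r)).2, hjr⟩, hlt, Fin.ext ?_⟩)
    show (k:ℕ) = r + (T (decode ((k:ℕ)-r)).2 + (decode ((k:ℕ)-r)).1)
    omega
  · exact Or.inr (Or.inr (by omega))

end ExtPtAux

namespace ExtPtAux
open Matrix
variable {n r : ℕ}

noncomputable def GM (n r : ℕ) (hr : 0 < r) : Matrix (Fin n) (Fin r) ℝ :=
  Matrix.of (vrow n r hr)

noncomputable def XM (n r : ℕ) (hr : 0 < r) : Matrix (Fin n) (Fin n) ℝ :=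
  GM n r hr * (GM n r hr)ᵀ

variable (hr : 0 < r)

lemma XM_apply (a b : Fin n) : XM n r hr a b = vrow n r hr a ⬝ᵥ vrow n r hr b := by
  simp [XM, GM, mul_apply, dotProduct]

lemma XM_posSemidef : (XM n r hr).PosSemidef := by
  have := Matrix.posSemidef_self_mul_conjTranspose (GM n r hr)
  rwa [Matrix.conjTranspose_eq_transpose_of_trivial] at this

lemma XM_diag_one (hn : r + T r ≤ n) (a : Fin n) : XM n r hr a a = 1 := by
  rw [XM_apply]
  rcases row_cases hn a with ⟨i, rfl⟩ | ⟨i, j, hij, rfl⟩ | hcopy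
  · rw [vrow_rho hr hn, bvec_dot, bvec]; simp
  · rw [vrow_pi hr hn, pvec_dot]
    have hne : i ≠ j := fun e => by rw [e] at hij; omega
    have h1 : pvec r i j i = s := by simp [pvec, bvec, hne, Ne.symm hne]
    have h2 : pvec r i j j = s := by simp [pvec, bvec, hne, Ne.symm hne]
    rw [h1, h2]
    nlinarith [s_mul_s]
  · rw [vrow_copy hr a hcopy, bvec_dot, bvec]; simp

lemma XM_mem_elliptope (hn : r + T r ≤ n) : XM n r hr ∈ elliptope n :=
  ⟨XM_posSemidef hr, XM_diag_one hr hn⟩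

lemma XM_base (hn : r + T r ≤ n) (i j : Fin r) :
    XM n r hr (ρ hn i) (ρ hn j) = if i = j then 1 else 0 := by
  rw [XM_apply, vrow_rho hr hn, vrow_rho hr hn, bvec_dot, bvec]

lemma GM_rank (hn : r + T r ≤ n) : (GM n r hr).rank = r := by
  have hle : (GM n r hr).rank ≤ r := by
    simpa using Matrix.rank_le_card_width (GM n r hr)
  have htop : LinearMap.range (GM n r hr)ᵀ.mulVecLin = ⊤ := by
    apply top_unique
    rw [← (Pi.basisFun ℝ (Fin r)).span_eq]
    apply Submodule.span_le.2
    rintro _ ⟨i, rfl⟩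
    refine ⟨Pi.single (ρ hn i) 1, ?_⟩
    rw [mulVecLin_apply, mulVec_single_one]
    funext t
    simp only [mul_one, Pi.basisFun_apply]
    show (GM n r hr) (ρ hn i) t = _
    rw [GM, Matrix.of_apply, vrow_rho hr hn, bvec]
    simp [Pi.single_apply]
  have h2 : (GM n r hr)ᵀ.rank = r := by
    rw [Matrix.rank, htop, finrank_top]; simp
  have := Matrix.rank_transpose (GM n r hr)
  omega

lemma XM_rank (hn : r + T r ≤ n) : (XM n r hr).rank = r := by
  rw [XM, Matrix.rank_self_mul_transpose, GM_rank hr hn]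

/-! ### kernel relations -/

lemma GMt_mulVec_single (a : Fin n) :
    (GM n r hr)ᵀ *ᵥ Pi.single a 1 = vrow n r hr a := by
  rw [mulVec_single]
  funext t
  simp [GM]

lemma rel_pair (hn : r + T r ≤ n) {P : Matrix (Fin n) (Fin n) ℝ}
    (hker : ∀ y : Fin n → ℝ, (GM n r hr)ᵀ *ᵥ y = 0 → P *ᵥ y = 0)
    (i j : Fin r) (hij : (i:ℕ) < (j:ℕ)) (d : Fin n) :
    P d (π hn i j hij) = s * (P d (ρ hn i) + P d (ρ hn j)) := by
  set y : Fin n → ℝ :=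
    (Pi.single (π hn i j hij) 1 : Fin n → ℝ) - s • (Pi.single (ρ hn i) 1 : Fin n → ℝ)
      - s • (Pi.single (ρ hn j) 1 : Fin n → ℝ) with hy
  have hGy : (GM n r hr)ᵀ *ᵥ y = 0 := by
    rw [hy, mulVec_sub, mulVec_sub, mulVec_smul, mulVec_smul,
      GMt_mulVec_single hr, GMt_mulVec_single hr, GMt_mulVec_single hr,
      vrow_pi hr hn, vrow_rho hr hn, vrow_rho hr hn]
    funext t
    simp [pvec]
    ring
  have h0 := congrFun (hker y hGy) d
  rw [hy, mulVec_sub, mulVec_sub, mulVec_smul, mulVec_smul,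
    mulVec_single_one, mulVec_single_one, mulVec_single_one] at h0
  simp only [Pi.sub_apply, Pi.smul_apply, mul_one, smul_eq_mul, Pi.zero_apply, col_apply] at h0
  linarith [h0]

lemma rel_copy (hn : r + T r ≤ n) {P : Matrix (Fin n) (Fin n) ℝ}
    (hker : ∀ y : Fin n → ℝ, (GM n r hr)ᵀ *ᵥ y = 0 → P *ᵥ y = 0)
    (k : Fin n) (hk : r + T r ≤ (k:ℕ)) (d : Fin n) :
    P d k = P d (ρ hn ⟨0, hr⟩) := by
  set y : Fin n → ℝ := (Pi.single k 1 : Fin n → ℝ) - (Pi.single (ρ hn ⟨0, hr⟩) 1 : Fin n → ℝ) with hy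
  have hGy : (GM n r hr)ᵀ *ᵥ y = 0 := by
    rw [hy, mulVec_sub, GMt_mulVec_single hr, GMt_mulVec_single hr,
      vrow_copy hr k hk, vrow_rho hr hn]
    simp
  have h0 := congrFun (hker y hGy) d
  rw [hy, mulVec_sub, mulVec_single_one, mulVec_single_one] at h0
  simp only [Pi.sub_apply, mul_one, Pi.zero_apply, col_apply] at h0
  linarith [h0]

end ExtPtAux

namespace ExtPtAux
open Matrix
variable {n r : ℕ}

lemma eq_of_relations (hr : 0 < r) (hn : r + T r ≤ n)
    {P Q : Matrix (Fin n) (Fin n) ℝ}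
    (hPsymm : ∀ a b, P a b = P b a) (hQsymm : ∀ a b, Q a b = Q b a)
    (hPker : ∀ y : Fin n → ℝ, (GM n r hr)ᵀ *ᵥ y = 0 → P *ᵥ y = 0)
    (hQker : ∀ y : Fin n → ℝ, (GM n r hr)ᵀ *ᵥ y = 0 → Q *ᵥ y = 0)
    (hbase : ∀ i j : Fin r, P (ρ hn i) (ρ hn j) = Q (ρ hn i) (ρ hn j)) :
    P = Q := by
  have step1 : ∀ (i : Fin r) (b : Fin n), P (ρ hn i) b = Q (ρ hn i) b := by
    intro i b
    rcases row_cases hn b with ⟨j, rfl⟩ | ⟨i', j', hij', rfl⟩ | hcopy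
    · exact hbase i j
    · rw [rel_pair hr hn hPker, rel_pair hr hn hQker, hbase i i', hbase i j']
    · rw [rel_copy hr hn hPker _ hcopy, rel_copy hr hn hQker _ hcopy, hbase]
  funext a b
  rcases row_cases hn a with ⟨i, rfl⟩ | ⟨i, j, hij, rfl⟩ | hcopy
  · exact step1 i b
  · rw [hPsymm, hQsymm, rel_pair hr hn hPker, rel_pair hr hn hQker,
      hPsymm b (ρ hn i), hPsymm b (ρ hn j), hQsymm b (ρ hn i), hQsymm b (ρ hn j),
      step1, step1]
  · rw [hPsymm, hQsymm, rel_copy hr hn hPker _ hcopy, rel_copy hr hn hQker _ hcopy,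
      hPsymm b, hQsymm b, step1]

lemma base_values (hr : 0 < r) (hn : r + T r ≤ n)
    {P : Matrix (Fin n) (Fin n) ℝ}
    (hPsymm : ∀ a b, P a b = P b a)
    (hdiag : ∀ a, P a a = 1)
    (hPker : ∀ y : Fin n → ℝ, (GM n r hr)ᵀ *ᵥ y = 0 → P *ᵥ y = 0)
    (i j : Fin r) : P (ρ hn i) (ρ hn j) = if i = j then 1 else 0 := by
  -- first handle i.val < j.val
  have key : ∀ (i j : Fin r), (i:ℕ) < (j:ℕ) → P (ρ hn i) (ρ hn j) = 0 := by
    intro i j hij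
    have h1 : P (π hn i j hij) (π hn i j hij)
        = s * (P (π hn i j hij) (ρ hn i) + P (π hn i j hij) (ρ hn j)) :=
      rel_pair hr hn hPker i j hij _
    rw [hPsymm (π hn i j hij) (ρ hn i), hPsymm (π hn i j hij) (ρ hn j),
      rel_pair hr hn hPker i j hij (ρ hn i), rel_pair hr hn hPker i j hij (ρ hn j),
      hdiag, hdiag, hdiag] at h1
    have hji : P (ρ hn j) (ρ hn i) = P (ρ hn i) (ρ hn j) := hPsymm _ _
    rw [hji] at h1
    nlinarith [s_mul_s, h1]
  rcases lt_trichotomy (i:ℕ) (j:ℕ) with h | h | h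
  · rw [key i j h, if_neg (fun e => by rw [e] at h; omega)]
  · have : i = j := Fin.ext h
    rw [this, if_pos rfl, hdiag]
  · rw [hPsymm, key j i h, if_neg (fun e => by rw [e] at h; omega)]

lemma mem_ker_of_combo (hr : 0 < r)
    {P Q : Matrix (Fin n) (Fin n) ℝ} {a b : ℝ}
    (hP : P.PosSemidef) (hQ : Q.PosSemidef)
    (ha : 0 < a) (hb : 0 < b)
    (hcombo : a • P + b • Q = XM n r hr) :
    ∀ y : Fin n → ℝ, (GM n r hr)ᵀ *ᵥ y = 0 → P *ᵥ y = 0 := by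
  intro y hy
  have hXy : XM n r hr *ᵥ y = 0 := by
    rw [XM, ← mulVec_mulVec, hy, mulVec_zero]
  have hexp : a * (y ⬝ᵥ (P *ᵥ y)) + b * (y ⬝ᵥ (Q *ᵥ y)) = 0 := by
    have : y ⬝ᵥ (XM n r hr *ᵥ y) = 0 := by rw [hXy, dotProduct_zero]
    rw [← hcombo] at this
    rw [add_mulVec, smul_mulVec, smul_mulVec, dotProduct_add,
      dotProduct_smul, dotProduct_smul, smul_eq_mul, smul_eq_mul] at this
    exact this
  have hPy : (0:ℝ) ≤ y ⬝ᵥ (P *ᵥ y) := by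
    have := hP.dotProduct_mulVec_nonneg y
    simpa using this
  have hQy : (0:ℝ) ≤ y ⬝ᵥ (Q *ᵥ y) := by
    have := hQ.dotProduct_mulVec_nonneg y
    simpa using this
  have hzero : y ⬝ᵥ (P *ᵥ y) = 0 := by nlinarith
  have := (hP.dotProduct_mulVec_zero_iff y).1 (by simpa using hzero)
  exact this

end ExtPtAux

open ExtPtAux

theorem exists_extreme_point_of_rank (n r : ℕ) (hr : 1 ≤ r)
    (h : r * (r + 1) / 2 ≤ n) :
    ∃ X ∈ Set.extremePoints ℝ (elliptope n), X.rank = r := by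
  have hr' : 0 < r := hr
  have hn : r + T r ≤ n := by
    have h1 : (r+1).choose 2 = T r + r := by
      simp [T, Nat.choose_succ_succ, Nat.choose_one_right, Nat.add_comm]
    have h2 : (r+1).choose 2 = (r+1) * r / 2 := by
      rw [Nat.choose_two_right]; simp
    have h3 : (r+1) * r = r * (r+1) := Nat.mul_comm _ _
    omega
  refine ⟨XM n r hr', ?_, XM_rank hr' hn⟩
  rw [mem_extremePoints]
  refine ⟨XM_mem_elliptope hr' hn, ?_⟩
  intro P hP Q hQ hseg
  obtain ⟨a, b, ha, hb, hab, hsum⟩ := hseg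
  have hPker := mem_ker_of_combo hr' hP.1 hQ.1 ha hb hsum
  have hQker := mem_ker_of_combo hr' hQ.1 hP.1 hb ha (by rw [← hsum, add_comm])
  have hXker : ∀ y : Fin n → ℝ, (GM n r hr')ᵀ *ᵥ y = 0 → XM n r hr' *ᵥ y = 0 := by
    intro y hy
    rw [XM, ← mulVec_mulVec, hy, mulVec_zero]
  have hPsymm : ∀ c d, P c d = P d c := fun c d => by
    have := hP.1.1.apply c d
    simpa using this.symm
  have hQsymm : ∀ c d, Q c d = Q d c := fun c d => by
    have := hQ.1.1.apply c d
    simpa using this.symm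
  have hXsymm : ∀ c d, XM n r hr' c d = XM n r hr' d c := fun c d => by
    have := (XM_posSemidef hr').1.apply c d
    simpa using this.symm
  have hbaseP : ∀ i j : Fin r, P (ρ hn i) (ρ hn j) = XM n r hr' (ρ hn i) (ρ hn j) := by
    intro i j
    rw [base_values hr' hn hPsymm hP.2 hPker, XM_base hr' hn]
  have hbaseQ : ∀ i j : Fin r, Q (ρ hn i) (ρ hn j) = XM n r hr' (ρ hn i) (ρ hn j) := by
    intro i j
    rw [base_values hr' hn hQsymm hQ.2 hQker, XM_base hr' hn]
  exact ⟨eq_of_relations hr' hn hPsymm hXsymm hPker hXker hbaseP,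
    eq_of_relations hr' hn hQsymm hXsymm hQker hXker hbaseQ⟩
end

section
/- Let r ≥ 1, let e₁, …, e_r be the standard unit vectors of ℝʳ, and let n = r(r+1)/2. The Gram matrix X of the n unit vectors {eᵢ : i ∈ [r]} ∪ {(eᵢ + eⱼ)/√2 : 1 ≤ i < j ≤ r} is an extreme point of the elliptope Eₙ and has rank r. -/
open Matrix

def elliptopeI (ι : Type*) [Fintype ι] : Set (Matrix ι ι ℝ) :=
  {X | X.PosSemidef ∧ ∀ i, X i i = 1}

theorem gram_unit_pairs_extreme (r : ℕ) (hr : 1 ≤ r) :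
    let ι := Fin r ⊕ {p : Fin r × Fin r // p.1 < p.2}
    let v : ι → (Fin r → ℝ) := Sum.elim (fun i => Pi.single i 1)
      (fun p => (Real.sqrt 2)⁻¹ • (Pi.single p.1.1 (1 : ℝ) + Pi.single p.1.2 1))
    let X : Matrix ι ι ℝ := Matrix.of fun a b => v a ⬝ᵥ v b
    Fintype.card ι = r * (r + 1) / 2 ∧
      X ∈ Set.extremePoints ℝ (elliptopeI ι) ∧ X.rank = r := by
  intro ι v X
  have hss : Real.sqrt 2 * Real.sqrt 2 = 2 := Real.mul_self_sqrt (by norm_num)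
  have s2ne : Real.sqrt 2 ≠ 0 := by positivity
  have h12 : (Real.sqrt 2)⁻¹ = Real.sqrt 2 * 2⁻¹ := by
    field_simp
    rw [Real.sq_sqrt (by norm_num)]
  set D : Fin r → Fin r → ℝ := fun i j => if i = j then 1 else 0 with hD
  have hDsymm : ∀ i j, D i j = D j i := by
    intro i j; simp only [hD]; by_cases h : i = j <;> simp [h, Ne.symm, eq_comm]
  have hd : ∀ i j : Fin r, (Pi.single i 1 : Fin r → ℝ) ⬝ᵥ Pi.single j 1 = D i j := by
    intro i j; rw [single_dotProduct, one_mul, Pi.single_apply, hD]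
  have hX11 : ∀ i j, X (Sum.inl i) (Sum.inl j) = D i j := fun i j => hd i j
  have hX12 : ∀ i p, X (Sum.inl i) (Sum.inr p)
      = (Real.sqrt 2)⁻¹ * (D i p.1.1 + D i p.1.2) := by
    intro i p
    show (Pi.single i 1 : Fin r → ℝ) ⬝ᵥ
      ((Real.sqrt 2)⁻¹ • (Pi.single p.1.1 (1:ℝ) + Pi.single p.1.2 1)) = _
    rw [dotProduct_smul, dotProduct_add, hd, hd, smul_eq_mul]
  have hX21 : ∀ p i, X (Sum.inr p) (Sum.inl i)
      = (Real.sqrt 2)⁻¹ * (D p.1.1 i + D p.1.2 i) := by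
    intro p i
    show ((Real.sqrt 2)⁻¹ • (Pi.single p.1.1 (1:ℝ) + Pi.single p.1.2 1)) ⬝ᵥ
      (Pi.single i 1 : Fin r → ℝ) = _
    rw [smul_dotProduct, add_dotProduct, hd, hd, smul_eq_mul]
  have hX22 : ∀ p q, X (Sum.inr p) (Sum.inr q)
      = 2⁻¹ * (D p.1.1 q.1.1 + D p.1.1 q.1.2 + (D p.1.2 q.1.1 + D p.1.2 q.1.2)) := by
    intro p q
    show dotProduct ((Real.sqrt 2)⁻¹ • (Pi.single p.1.1 (1:ℝ) + Pi.single p.1.2 1) : Fin r → ℝ)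
      ((Real.sqrt 2)⁻¹ • (Pi.single q.1.1 (1:ℝ) + Pi.single q.1.2 1) : Fin r → ℝ) = _
    rw [smul_dotProduct, dotProduct_smul, dotProduct_add, add_dotProduct, add_dotProduct,
      hd, hd, hd, hd, smul_eq_mul, smul_eq_mul, ← mul_assoc, ← mul_inv, hss]
    ring
  -- X satisfies the linear relations
  have hXrel : ∀ (p : {p : Fin r × Fin r // p.1 < p.2}) (c : ι),
      Real.sqrt 2 * X c (Sum.inr p) = X c (Sum.inl p.1.1) + X c (Sum.inl p.1.2) := by
    intro p c
    cases c with
    | inl i =>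
        rw [hX12, hX11, hX11, ← mul_assoc, mul_inv_cancel₀ s2ne, one_mul]
    | inr q =>
        rw [hX22, hX21, hX21, h12]; ring
  have hne : ∀ p : {p : Fin r × Fin r // p.1 < p.2}, p.1.1 ≠ p.1.2 :=
    fun p => ne_of_lt p.2
  -- X is in the elliptope
  have hXmem : X ∈ elliptopeI ι := by
    constructor
    · have hXA : X = (Matrix.of fun (k : Fin r) (a : ι) => v a k)ᴴ *
          (Matrix.of fun (k : Fin r) (a : ι) => v a k) := by
        ext a b
        simp only [Matrix.mul_apply, Matrix.conjTranspose_apply, Matrix.of_apply, star_trivial]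
        rfl
      rw [hXA]
      exact Matrix.posSemidef_conjTranspose_mul_self _
    · intro a
      cases a with
      | inl i => rw [hX11]; simp [hD]
      | inr p => rw [hX22]; simp [hD, hne p, (hne p).symm]; norm_num
  -- the key uniqueness lemma
  have key : ∀ W : Matrix ι ι ℝ, W ∈ elliptopeI ι →
      (∀ (p : {p : Fin r × Fin r // p.1 < p.2}) (c : ι),
        Real.sqrt 2 * W c (Sum.inr p) = W c (Sum.inl p.1.1) + W c (Sum.inl p.1.2)) →
      W = X := by
    intro W hW hrel
    have hsym : ∀ c d : ι, W c d = W d c := by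
      intro c d
      have := hW.1.1.apply c d
      rwa [star_trivial, eq_comm] at this
    have hdiag : ∀ a, W a a = 1 := hW.2
    have hoff' : ∀ i j : Fin r, i < j → W (Sum.inl i) (Sum.inl j) = 0 := by
      intro i j hij
      set p : {p : Fin r × Fin r // p.1 < p.2} := ⟨(i, j), hij⟩ with hp
      have e1 := hrel p (Sum.inl i)
      have e2 := hrel p (Sum.inl j)
      have e3 := hrel p (Sum.inr p)
      have hpi : p.1.1 = i := rfl
      have hpj : p.1.2 = j := rfl
      rw [hpi, hpj] at e1 e2 e3
      rw [hdiag] at e1 e3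
      rw [hdiag, hsym (Sum.inl j) (Sum.inl i)] at e2
      rw [hsym (Sum.inr p) (Sum.inl i), hsym (Sum.inr p) (Sum.inl j)] at e3
      rw [mul_one] at e3
      have e4 : Real.sqrt 2 * Real.sqrt 2 =
          Real.sqrt 2 * (W (Sum.inl i) (Sum.inr p) + W (Sum.inl j) (Sum.inr p)) := by
        rw [e3]
      rw [hss, mul_add, e1, e2] at e4
      linarith
    have hd' : ∀ i j, W (Sum.inl i) (Sum.inl j) = D i j := by
      intro i j
      rcases lt_trichotomy i j with h | h | h
      · rw [hoff' i j h, hD]; simp [ne_of_lt h]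
      · subst h; rw [hdiag, hD]; simp
      · rw [hsym, hoff' j i h, hD]; simp [(ne_of_lt h).symm]
    have hWli : ∀ (i : Fin r) p, W (Sum.inl i) (Sum.inr p)
        = (Real.sqrt 2)⁻¹ * (D i p.1.1 + D i p.1.2) := by
      intro i p
      have e := hrel p (Sum.inl i)
      rw [hd', hd'] at e
      rw [← e, ← mul_assoc, inv_mul_cancel₀ s2ne, one_mul]
    have hWil : ∀ p (i : Fin r), W (Sum.inr p) (Sum.inl i)
        = (Real.sqrt 2)⁻¹ * (D p.1.1 i + D p.1.2 i) := by
      intro p i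
      rw [hsym, hWli, hDsymm i p.1.1, hDsymm i p.1.2]
    ext c d
    cases c with
    | inl i =>
        cases d with
        | inl j => rw [hd', hX11]
        | inr q => rw [hWli, hX12]
    | inr p =>
        cases d with
        | inl j => rw [hWil, hX21]
        | inr q =>
            rw [hX22]
            apply mul_left_cancel₀ s2ne
            rw [hrel q (Sum.inr p), hWil, hWil, h12]
            ring
  refine ⟨?_, ?_, ?_⟩
  · -- cardinality
    have e : {p : Fin r × Fin r // p.1 < p.2} ≃ Σ j : Fin r, Fin j.val :=
      { toFun := fun p => ⟨p.1.2, ⟨p.1.1, p.2⟩⟩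
        invFun := fun x => ⟨(⟨x.2.val, lt_trans x.2.isLt x.1.isLt⟩, x.1), x.2.isLt⟩
        left_inv := fun p => rfl
        right_inv := fun x => rfl }
    have : Fintype.card ι = r + Fintype.card {p : Fin r × Fin r // p.1 < p.2} := by
      simp [ι, Fintype.card_sum]
    rw [this, Fintype.card_congr e, Fintype.card_sigma]
    simp only [Fintype.card_fin]
    rw [Fin.sum_univ_eq_sum_range (fun i => i), Finset.sum_range_id]
    obtain ⟨m, rfl⟩ : ∃ m, r = m + 1 := ⟨r - 1, by omega⟩
    rw [Nat.add_sub_cancel, show (m+1) * (m+1+1) = 2*(m+1) + (m+1)*m by ring,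
      Nat.mul_add_div (by norm_num)]
  · -- extremality
    refine ⟨hXmem, ?_⟩
    rintro Y hY Z hZ ⟨a, b, ha, hb, hab, hsum⟩
    -- the kernel vectors
    have hrelW : ∀ (a b : ℝ), 0 < a → 0 < b → ∀ (W W' : Matrix ι ι ℝ), W.PosSemidef → W'.PosSemidef →
        a • W + b • W' = X →
        ∀ (p : {p : Fin r × Fin r // p.1 < p.2}) (c : ι),
          Real.sqrt 2 * W c (Sum.inr p) = W c (Sum.inl p.1.1) + W c (Sum.inl p.1.2) := by
      intro a b ha hb W W' hWp hW'p hWX p c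
      set q : ι → ℝ := Real.sqrt 2 • (Pi.single (Sum.inr p) 1 : ι → ℝ)
        - (Pi.single (Sum.inl p.1.1) 1 : ι → ℝ) - (Pi.single (Sum.inl p.1.2) 1 : ι → ℝ) with hq
      have hXq : X *ᵥ q = 0 := by
        ext j
        simp only [hq, mulVec_sub, mulVec_smul, mulVec_single, Pi.sub_apply, Pi.smul_apply,
          Pi.zero_apply, smul_eq_mul, op_smul_eq_mul, col_apply, mul_one]
        have := hXrel p j
        linarith
      have hq0 : q ⬝ᵥ X *ᵥ q = 0 := by rw [hXq, dotProduct_zero]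
      have hWq0 : W *ᵥ q = 0 := by
        have hexp : a * (q ⬝ᵥ W *ᵥ q) + b * (q ⬝ᵥ W' *ᵥ q) = 0 := by
          rw [← hq0, ← hWX]
          rw [add_mulVec, smul_mulVec, smul_mulVec, dotProduct_add,
            dotProduct_smul, dotProduct_smul, smul_eq_mul, smul_eq_mul]
        have h1 : 0 ≤ q ⬝ᵥ W *ᵥ q := by simpa [star_trivial] using hWp.dotProduct_mulVec_nonneg q
        have h2 : 0 ≤ q ⬝ᵥ W' *ᵥ q := by simpa [star_trivial] using hW'p.dotProduct_mulVec_nonneg q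
        have h3 : q ⬝ᵥ W *ᵥ q = 0 := by nlinarith
        have := (hWp.dotProduct_mulVec_zero_iff q).mp (by rwa [star_trivial])
        exact this
      have := congrFun hWq0 c
      simp only [hq, mulVec_sub, mulVec_smul, mulVec_single, Pi.sub_apply, Pi.smul_apply,
        Pi.zero_apply, smul_eq_mul, op_smul_eq_mul, col_apply, mul_one] at this
      linarith
    have hYX : Y = X := key Y hY (hrelW a b ha hb Y Z hY.1 hZ.1 hsum)
    have hZX : Z = X := key Z hZ (hrelW b a hb ha Z Y hZ.1 hY.1 (by rw [← hsum, add_comm]))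
    exact hYX
  · -- rank
    set A : Matrix (Fin r) ι ℝ := Matrix.of fun (k : Fin r) (a : ι) => v a k with hA
    have hXA : X = Aᴴ * A := by
      ext a b
      simp only [hA, Matrix.mul_apply, Matrix.conjTranspose_apply, Matrix.of_apply, star_trivial]
      rfl
    rw [hXA, Matrix.rank_conjTranspose_mul_self]
    refine le_antisymm ?_ ?_
    · simpa using A.rank_le_card_height
    · set B : Matrix ι (Fin r) ℝ := Matrix.of fun (c : ι) (k : Fin r) =>
        Sum.elim (fun i => if i = k then (1:ℝ) else 0) (fun _ => 0) c with hB
      have hAB : A * B = 1 := by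
        ext k k'
        simp only [hA, hB, Matrix.mul_apply, Matrix.of_apply, Matrix.one_apply]
        rw [Fintype.sum_sum_type]
        simp [Pi.single_apply, Sum.elim_inl, Sum.elim_inr, ite_mul, Finset.sum_ite_eq, eq_comm]
        show (if k = k' then (1:ℝ) else 0) = (Pi.single k' 1 : Fin r → ℝ) k
        simp [Pi.single_apply]
      have := Matrix.rank_mul_le_left A B
      rw [hAB, Matrix.rank_one] at this
      simpa using this
end

section
/- Let x ∈ E(G) be a partial matrix over a graph G = ([n], E), let C ⊆ [n] be a clique of G, and let i ∉ C, j ∈ C with {i,j} ∉ E such that i is adjacent to every node of C ∖ {j}. If the principal submatrix x[C] (with unit diagonal) is singular while x[C ∖ {j}] is nonsingular, then the (i,j)-entry Xᵢⱼ takes the same value in every positive semidefinite completion X of x. -/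
open Matrix

theorem clique_forces_entry (n : ℕ) (G : SimpleGraph (Fin n)) (C : Finset (Fin n))
    (hC : G.IsClique (C : Set (Fin n))) (i j : Fin n) (hi : i ∉ C) (hj : j ∈ C)
    (hij : ¬ G.Adj i j) (hadj : ∀ c ∈ C, c ≠ j → G.Adj i c)
    (X Y : Matrix (Fin n) (Fin n) ℝ)
    (hX : X ∈ elliptope n) (hY : Y ∈ elliptope n)
    (hagree : ∀ a b, G.Adj a b → X a b = Y a b)
    (hsing : (Matrix.of fun (a b : {c // c ∈ C}) => X a b).det = 0)
    (hnonsing : (Matrix.of fun (a b : {c // c ∈ C.erase j}) => X a b).det ≠ 0) :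
    X i j = Y i j := by
  obtain ⟨hXpsd, hXdiag⟩ := hX
  obtain ⟨hYpsd, hYdiag⟩ := hY
  have hXY : ∀ a ∈ C, ∀ b ∈ C, X a b = Y a b := by
    intro a ha b hb
    by_cases hab : a = b
    · subst hab; rw [hXdiag, hYdiag]
    · exact hagree a b (hC ha hb hab)
  obtain ⟨v, hv0, hAv⟩ := (Matrix.exists_mulVec_eq_zero_iff).mpr hsing
  set w : Fin n → ℝ := fun c => if h : c ∈ C then v ⟨c, h⟩ else 0 with hw
  have hwC : ∀ (c : {c // c ∈ C}), w c = v c := fun c => dif_pos c.2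
  have hw0 : ∀ c : Fin n, c ∉ C → w c = 0 := fun c hc => dif_neg hc
  -- rows of X indexed by C annihilate w
  have key : ∀ a ∈ C, ∑ c ∈ C, X a c * w c = 0 := by
    intro a ha
    have h1 := congrFun hAv ⟨a, ha⟩
    simp only [Matrix.mulVec, dotProduct, Matrix.of_apply, Pi.zero_apply] at h1
    calc ∑ c ∈ C, X a c * w c = ∑ c : {c // c ∈ C}, X a c * w c :=
          (Finset.sum_coe_sort C (fun c => X a c * w c)).symm
      _ = ∑ c : {c // c ∈ C}, X a c * v c := by
          exact Finset.sum_congr rfl (fun c _ => by rw [hwC])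
      _ = 0 := h1
  -- w j ≠ 0
  have hwj : w j ≠ 0 := by
    intro hwj
    apply hnonsing
    rw [← Matrix.exists_mulVec_eq_zero_iff]
    refine ⟨fun c => v ⟨c.1, Finset.mem_of_mem_erase c.2⟩, ?_, ?_⟩
    · obtain ⟨b, hb⟩ := Function.ne_iff.mp hv0
      have hbj : b.1 ≠ j := by
        intro h
        apply hb
        have : b = ⟨j, hj⟩ := Subtype.ext h
        rw [this, ← hwC ⟨j, hj⟩]
        exact hwj
      intro h
      exact hb (by simpa using congrFun h ⟨b.1, Finset.mem_erase.mpr ⟨hbj, b.2⟩⟩)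
    · funext a
      have haC : a.1 ∈ C := Finset.mem_of_mem_erase a.2
      simp only [Matrix.mulVec, dotProduct, Matrix.of_apply, Pi.zero_apply]
      have h2 : ∑ c : {c // c ∈ C.erase j}, X a.1 c.1 * v ⟨c.1, Finset.mem_of_mem_erase c.2⟩
          = ∑ c ∈ C.erase j, X a.1 c * w c := by
        rw [← Finset.sum_coe_sort (C.erase j) (fun c => X a.1 c * w c)]
        exact Finset.sum_congr rfl (fun c _ => by
          rw [hw]; simp [Finset.mem_of_mem_erase c.2])
      rw [h2]
      have h3 : ∑ c ∈ C.erase j, X a.1 c * w c + X a.1 j * w j = ∑ c ∈ C, X a.1 c * w c :=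
        Finset.sum_erase_add C _ hj
      have := key a.1 haC
      rw [← h3, hwj] at this
      linarith
  -- X *ᵥ w = 0
  have hsumX : ∀ a : Fin n, (X *ᵥ w) a = ∑ c ∈ C, X a c * w c := by
    intro a
    simp only [Matrix.mulVec, dotProduct]
    exact (Finset.sum_subset (Finset.subset_univ C)
      (fun c _ hc => by rw [hw0 c hc, mul_zero])).symm
  have hsumY : ∀ a : Fin n, (Y *ᵥ w) a = ∑ c ∈ C, Y a c * w c := by
    intro a
    simp only [Matrix.mulVec, dotProduct]
    exact (Finset.sum_subset (Finset.subset_univ C)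
      (fun c _ hc => by rw [hw0 c hc, mul_zero])).symm
  have hXker : X *ᵥ w = 0 := by
    rw [← hXpsd.dotProduct_mulVec_zero_iff w]
    simp only [star_trivial, dotProduct]
    apply Finset.sum_eq_zero
    intro a _
    by_cases ha : a ∈ C
    · rw [hsumX, key a ha, mul_zero]
    · rw [hw0 a ha, zero_mul]
  have keyY : ∀ a ∈ C, ∑ c ∈ C, Y a c * w c = 0 := by
    intro a ha
    rw [← key a ha]
    exact Finset.sum_congr rfl (fun c hc => by rw [hXY a ha c hc])
  have hYker : Y *ᵥ w = 0 := by
    rw [← hYpsd.dotProduct_mulVec_zero_iff w]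
    simp only [star_trivial, dotProduct]
    apply Finset.sum_eq_zero
    intro a _
    by_cases ha : a ∈ C
    · rw [hsumY, keyY a ha, mul_zero]
    · rw [hw0 a ha, zero_mul]
  -- compare row i
  have hXi : ∑ c ∈ C, X i c * w c = 0 := by
    rw [← hsumX i, hXker]; rfl
  have hYi : ∑ c ∈ C, Y i c * w c = 0 := by
    rw [← hsumY i, hYker]; rfl
  have hdiff : ∑ c ∈ C, (X i c - Y i c) * w c = 0 := by
    simp only [sub_mul, Finset.sum_sub_distrib, hXi, hYi, sub_zero]
  have hsingle : ∑ c ∈ C, (X i c - Y i c) * w c = (X i j - Y i j) * w j := by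
    apply Finset.sum_eq_single j
    · intro c hc hcj
      rw [hagree i c (hadj c hc hcj), sub_self, zero_mul]
    · intro h; exact absurd hj h
  rw [hsingle] at hdiff
  have := mul_eq_zero.mp hdiff
  rcases this with h | h
  · linarith
  · exact absurd h hwj
end

section
/- Let X ∈ Eₙ and let Y ∈ Eₙ with ker X ⊆ ker Y. Then there exists ε > 0 such that X + ε(Y − X) and X − ε(Y − X) both belong to Eₙ. Consequently the smallest face of Eₙ containing X contains Y. -/
open Matrix

lemma quad_symm {n : ℕ} {X : Matrix (Fin n) (Fin n) ℝ} (hX : X.IsHermitian) (a b : Fin n → ℝ) :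
    a ⬝ᵥ X *ᵥ b = (X *ᵥ a) ⬝ᵥ b := by
  have hT : Xᵀ = X := by rw [← conjTranspose_eq_transpose_of_trivial]; exact hX
  rw [dotProduct_mulVec, ← mulVec_transpose, hT]

lemma exists_bound {n : ℕ} {X Y : Matrix (Fin n) (Fin n) ℝ} (hX : X.PosSemidef)
    (hY : Y.PosSemidef) (hker : ∀ u : Fin n → ℝ, X *ᵥ u = 0 → Y *ᵥ u = 0) :
    ∃ c : ℝ, 0 ≤ c ∧ ∀ u : Fin n → ℝ, u ⬝ᵥ Y *ᵥ u ≤ c * (u ⬝ᵥ X *ᵥ u) := by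
  classical
  let T : EuclideanSpace ℝ (Fin n) →ₗ[ℝ] (Fin n → ℝ) :=
    X.mulVecLin.comp (WithLp.linearEquiv 2 ℝ (∀ _ : Fin n, ℝ)).toLinearMap
  set K : Submodule ℝ (EuclideanSpace ℝ (Fin n)) := LinearMap.ker T with hK
  have hmemK : ∀ u : EuclideanSpace ℝ (Fin n), u ∈ K ↔ X *ᵥ u = 0 := by
    intro u; rw [hK, LinearMap.mem_ker]; exact Iff.rfl
  haveI : CompleteSpace K := FiniteDimensional.complete ℝ K
  by_cases hbot : Kᗮ = ⊥
  · -- K = ⊤, so X = 0 on everything, Y too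
    have htop : K = ⊤ := Submodule.orthogonal_eq_bot_iff.mp hbot
    refine ⟨0, le_refl _, fun u => ?_⟩
    have hXu : X *ᵥ u = 0 := (hmemK (WithLp.toLp 2 u)).mp (htop ▸ Submodule.mem_top)
    have hYu : Y *ᵥ u = 0 := hker u hXu
    simp [hYu]
  · obtain ⟨v, hvK, hvne⟩ := Submodule.exists_mem_ne_zero_of_ne_bot hbot
    set S : Set (EuclideanSpace ℝ (Fin n)) := Metric.sphere 0 1 ∩ (Kᗮ : Set (EuclideanSpace ℝ (Fin n))) with hS
    have hScpt : IsCompact S := (isCompact_sphere 0 1).inter_right (Kᗮ.closed_of_finiteDimensional)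
    have hSne : S.Nonempty := by
      refine ⟨‖v‖⁻¹ • v, ?_, Kᗮ.smul_mem _ hvK⟩
      simp [norm_smul, norm_ne_zero_iff.mpr hvne, inv_mul_cancel₀ (norm_ne_zero_iff.mpr hvne)]
    have hq : Continuous fun u : EuclideanSpace ℝ (Fin n) => u ⬝ᵥ X *ᵥ u := by
      simp only [dotProduct, mulVec]; fun_prop
    have hy : Continuous fun u : EuclideanSpace ℝ (Fin n) => u ⬝ᵥ Y *ᵥ u := by
      simp only [dotProduct, mulVec]; fun_prop
    obtain ⟨a, haS, hamin⟩ := hScpt.exists_isMinOn hSne hq.continuousOn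
    obtain ⟨b, hbS, hbmax⟩ := hScpt.exists_isMaxOn hSne hy.continuousOn
    set lam : ℝ := a ⬝ᵥ X *ᵥ a with hlam
    set C : ℝ := b ⬝ᵥ Y *ᵥ b with hC
    have hCnn : 0 ≤ C := by have h0 := hY.dotProduct_mulVec_nonneg b; rwa [star_trivial] at h0
    have hlampos : 0 < lam := by
      rcases lt_or_eq_of_le (by have h0 := hX.dotProduct_mulVec_nonneg a; rwa [star_trivial] at h0 : 0 ≤ lam) with h | h
      · exact h
      · exfalso
        have hXa : X *ᵥ a = 0 := (hX.dotProduct_mulVec_zero_iff a).mp h.symm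
        have haK : a ∈ K := (hmemK a).mpr hXa
        have haKp : a ∈ Kᗮ := haS.2
        have hinner : (inner ℝ a a : ℝ) = 0 := (Submodule.mem_orthogonal K a).mp haKp a haK
        have ha0 : a = 0 := inner_self_eq_zero.mp hinner
        have hna : ‖a‖ = 1 := by simpa using haS.1
        rw [ha0] at hna; simp at hna
    refine ⟨C / lam, div_nonneg hCnn hlampos.le, fun u => ?_⟩
    set u' : EuclideanSpace ℝ (Fin n) := WithLp.toLp 2 u with hu'
    set a0 : EuclideanSpace ℝ (Fin n) := (K.orthogonalProjection u' : EuclideanSpace ℝ (Fin n))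
      with ha0
    set b0 : EuclideanSpace ℝ (Fin n) := u' - a0 with hb0
    have hb0K : b0 ∈ Kᗮ := K.sub_starProjection_mem_orthogonal u'
    have hXa0 : X *ᵥ a0 = 0 := (hmemK a0).mp (K.orthogonalProjection u').2
    have hYa0 : Y *ᵥ a0 = 0 := hker a0 hXa0
    have hsum : (u : Fin n → ℝ) = (a0 : Fin n → ℝ) + (b0 : Fin n → ℝ) := by
      funext i; simp [hb0, hu']
    have hqu : u ⬝ᵥ X *ᵥ u = (b0 : Fin n → ℝ) ⬝ᵥ X *ᵥ (b0 : Fin n → ℝ) := by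
      rw [hsum, mulVec_add, hXa0, zero_add, add_dotProduct, quad_symm hX.1, hXa0,
        zero_dotProduct, zero_add]
    have hyu : u ⬝ᵥ Y *ᵥ u = (b0 : Fin n → ℝ) ⬝ᵥ Y *ᵥ (b0 : Fin n → ℝ) := by
      rw [hsum, mulVec_add, hYa0, zero_add, add_dotProduct, quad_symm hY.1, hYa0,
        zero_dotProduct, zero_add]
    by_cases hb : b0 = 0
    · rw [hqu, hyu, hb]
      norm_num
    · set t : ℝ := ‖b0‖ with ht
      have htpos : 0 < t := norm_pos_iff.mpr hb
      set w : EuclideanSpace ℝ (Fin n) := t⁻¹ • b0 with hw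
      have hwS : w ∈ S := by
        constructor
        · simp [hw, norm_smul, ht, abs_of_pos (inv_pos.mpr htpos),
            inv_mul_cancel₀ (norm_ne_zero_iff.mpr hb)]
        · exact Kᗮ.smul_mem _ hb0K
      have hwb : (b0 : Fin n → ℝ) = t • (w : Fin n → ℝ) := by
        funext i
        show b0 i = t * (t⁻¹ * b0 i)
        rw [← mul_assoc, mul_inv_cancel₀ htpos.ne', one_mul]
      have scale : ∀ (M : Matrix (Fin n) (Fin n) ℝ) (x : Fin n → ℝ),
          (t • x) ⬝ᵥ M *ᵥ (t • x) = t ^ 2 * (x ⬝ᵥ M *ᵥ x) := by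
        intro M x
        rw [mulVec_smul, smul_dotProduct, dotProduct_smul, smul_eq_mul, smul_eq_mul]
        ring
      have hlw : lam ≤ (w : Fin n → ℝ) ⬝ᵥ X *ᵥ (w : Fin n → ℝ) := hamin hwS
      have hCw : (w : Fin n → ℝ) ⬝ᵥ Y *ᵥ (w : Fin n → ℝ) ≤ C := hbmax hwS
      rw [hqu, hyu, hwb, scale X, scale Y]
      have h1 : t ^ 2 * (w ⬝ᵥ Y *ᵥ w) ≤ t ^ 2 * C :=
        mul_le_mul_of_nonneg_left hCw (sq_nonneg t)
      have h2 : C / lam * (t ^ 2 * lam) ≤ C / lam * (t ^ 2 * (w ⬝ᵥ X *ᵥ w)) := by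
        apply mul_le_mul_of_nonneg_left _ (div_nonneg hCnn hlampos.le)
        exact mul_le_mul_of_nonneg_left hlw (sq_nonneg t)
      calc t ^ 2 * (w ⬝ᵥ Y *ᵥ w) ≤ t ^ 2 * C := h1
        _ = C / lam * (t ^ 2 * lam) := by field_simp
        _ ≤ C / lam * (t ^ 2 * (w ⬝ᵥ X *ᵥ w)) := h2

lemma pert {n : ℕ} {X Y : Matrix (Fin n) (Fin n) ℝ}
    (hX : X ∈ elliptope n) (hY : Y ∈ elliptope n)
    (hker : ∀ u : Fin n → ℝ, X.mulVec u = 0 → Y.mulVec u = 0) :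
    ∃ ε : ℝ, 0 < ε ∧ ε < 1 ∧ X + ε • (Y - X) ∈ elliptope n ∧
      X - ε • (Y - X) ∈ elliptope n := by
  obtain ⟨c, hc, hbound⟩ := exists_bound hX.1 hY.1 hker
  set ε : ℝ := 1 / (c + 2) with hε
  have hc2 : (0:ℝ) < c + 2 := by linarith
  have hε0 : 0 < ε := by positivity
  have hε1 : ε < 1 := by rw [hε, div_lt_one hc2]; linarith
  have hεc : ε * c ≤ 1 := by
    rw [hε, div_mul_eq_mul_div, div_le_one hc2]; linarith
  have hdiag : ∀ i, (ε • (Y - X)) i i = 0 := by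
    intro i
    simp [Matrix.smul_apply, Matrix.sub_apply, hX.2 i, hY.2 i]
  have hherm : (ε • (Y - X)).IsHermitian := by
    show (ε • (Y - X))ᴴ = ε • (Y - X)
    rw [conjTranspose_smul, star_trivial, (hY.1.1.sub hX.1.1)]
  have hquad : ∀ u : Fin n → ℝ, u ⬝ᵥ (ε • (Y - X)) *ᵥ u = ε * (u ⬝ᵥ Y *ᵥ u - u ⬝ᵥ X *ᵥ u) := by
    intro u
    rw [smul_mulVec, dotProduct_smul, smul_eq_mul, sub_mulVec, dotProduct_sub]
  refine ⟨ε, hε0, hε1, ⟨PosSemidef.of_dotProduct_mulVec_nonneg (hX.1.1.add hherm) fun u => ?_, fun i => by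
      simp [Matrix.add_apply, hdiag i, hX.2 i]⟩,
    ⟨PosSemidef.of_dotProduct_mulVec_nonneg (hX.1.1.sub hherm) fun u => ?_, fun i => by
      simp [Matrix.sub_apply, hdiag i, hX.2 i]⟩⟩
  · have hq := hX.1.dotProduct_mulVec_nonneg u
    have hy := hY.1.dotProduct_mulVec_nonneg u
    simp only [star_trivial] at hq hy ⊢
    rw [add_mulVec, dotProduct_add, hquad u]
    nlinarith [hq, hy, hε0, hε1]
  · have hq := hX.1.dotProduct_mulVec_nonneg u
    have hb := hbound u
    simp only [star_trivial] at hq ⊢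
    rw [sub_mulVec, dotProduct_sub, hquad u]
    nlinarith [mul_le_mul_of_nonneg_left hb hε0.le,
      mul_nonneg (sub_nonneg.mpr hεc) hq, hq]

theorem perturbation_and_face (n : ℕ) (X Y : Matrix (Fin n) (Fin n) ℝ)
    (hX : X ∈ elliptope n) (hY : Y ∈ elliptope n)
    (hker : ∀ u : Fin n → ℝ, X.mulVec u = 0 → Y.mulVec u = 0) :
    (∃ ε : ℝ, 0 < ε ∧ X + ε • (Y - X) ∈ elliptope n ∧
        X - ε • (Y - X) ∈ elliptope n) ∧
    (∀ F : Set (Matrix (Fin n) (Fin n) ℝ),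
        IsExtreme ℝ (elliptope n) F → X ∈ F → Y ∈ F) := by
  obtain ⟨ε, hε0, hε1, hA, hB⟩ := pert hX hY hker
  refine ⟨⟨ε, hε0, hA, hB⟩, fun F hF hXF => ?_⟩
  have hseg1 : X ∈ openSegment ℝ (X + ε • (Y - X)) (X - ε • (Y - X)) := by
    refine ⟨1/2, 1/2, by norm_num, by norm_num, by norm_num, ?_⟩
    module
  obtain ⟨hAF, hBF⟩ := And.intro (hF.2 hA hB hXF hseg1) (hF.right_mem_of_mem_openSegment hA hB hXF hseg1)
  have hseg2 : X + ε • (Y - X) ∈ openSegment ℝ X Y := by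
    refine ⟨1 - ε, ε, by linarith, hε0, by ring, ?_⟩
    module
  exact hF.right_mem_of_mem_openSegment hX hY hAF hseg2
end
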